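/- arXiv:math/0501370 — 8 statements merged into one kernel-verified Lean document; each statement's English description precedes it below -/
import Mathlib

section
/- There exists a 2-ladder of cardinality ℵ₁, i.e., a lattice L with |L| = ℵ₁ such that every principal ideal (a] is finite and every element covers at most 2 elements. -/
/-- A `k`-ladder: a lattice in which every principal ideal is finite and
every element covers at most `k` elements. -/
def IsLadder (k : ℕ) (L : Type*) [Lattice L] : Prop :=
  ∀ a : L, (Set.Iic a).Finite ∧ {b : L | b ⋖ a}.ncard ≤ k

open Cardinal Set

namespace TwoLadder
noncomputable section
open Classical

/-- The index set: a well order of cardinality ℵ₁ all of whose initial segments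
are countable. -/
abbrev W : Type := (Cardinal.aleph 1).ord.ToType

instance : LinearOrder W := inferInstanceAs (LinearOrder ((Cardinal.aleph 1).ord.ToType))
instance : WellFoundedLT W := inferInstanceAs (WellFoundedLT ((Cardinal.aleph 1).ord.ToType))

theorem countable_Iio (β : W) : (Set.Iio β).Countable := by
  rw [Cardinal.countable_iff_lt_aleph_one]
  exact Cardinal.mk_Iio_ord_toType β

theorem mk_W : #W = Cardinal.aleph 1 := by
  rw [Cardinal.mk_toType, Cardinal.card_ord]

/-- The carrier: `none` is the bottom element; `some (β, n)` is the `n`-th element of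
the chain added at stage `β`. -/
abbrev L : Type := Option (W × ℕ)

/-- Stage of an element. -/
def stg : L → WithBot W
  | none => ⊥
  | some p => (p.1 : WithBot W)

@[simp] theorem stg_none : stg none = ⊥ := rfl
@[simp] theorem stg_some (β : W) (n : ℕ) : stg (some (β, n)) = (β : WithBot W) := rfl

/-- The order generated by a family `A` of "cofinal sequences". -/
inductive Le (A : W → ℕ → L) : L → L → Prop
  | bot (x : L) : Le A none x
  | chain {β : W} {k m : ℕ} (h : k ≤ m) : Le A (some (β, k)) (some (β, m))
  | step {x : L} {β : W} {m : ℕ} (h : Le A x (A β m)) : Le A x (some (β, m))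

/-- Invariant 1 at stage `β`: values of `A β` live strictly below stage `β`. -/
def I1 (A : W → ℕ → L) (β : W) : Prop := ∀ m, stg (A β m) < (β : WithBot W)
/-- Invariant 2 at stage `β`: `A β` is monotone. -/
def I2 (A : W → ℕ → L) (β : W) : Prop := ∀ k m, k ≤ m → Le A (A β k) (A β m)
/-- Invariant 3 at stage `β`: `A β` is cofinal below `β`. -/
def I3 (A : W → ℕ → L) (β : W) : Prop := ∀ x : L, stg x < (β : WithBot W) → ∃ n, Le A x (A β n)

theorem le_none_iff {A : W → ℕ → L} {x : L} : Le A x none ↔ x = none := by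
  constructor
  · intro h
    cases h
    rfl
  · rintro rfl; exact Le.bot none

theorem le_some_iff {A : W → ℕ → L} {x : L} {β : W} {m : ℕ} :
    Le A x (some (β, m)) ↔ (∃ k ≤ m, x = some (β, k)) ∨ Le A x (A β m) := by
  constructor
  · intro h
    cases h with
    | bot => exact Or.inr (Le.bot _)
    | chain h => exact Or.inl ⟨_, h, rfl⟩
    | step h => exact Or.inr h
  · rintro (⟨k, hk, rfl⟩ | h)
    · exact Le.chain hk
    · exact Le.step h

theorem stg_mono {A : W → ℕ → L} (hA : ∀ β, I1 A β) {x y : L} (h : Le A x y) :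
    stg x ≤ stg y := by
  induction h with
  | bot => simp
  | chain h => simp
  | step h ih => exact ih.trans (hA _ _).le

theorem le_refl' (A : W → ℕ → L) (x : L) : Le A x x := by
  cases x with
  | none => exact Le.bot none
  | some p => exact Le.chain le_rfl

theorem le_trans' {A : W → ℕ → L} (hA1 : ∀ β, I1 A β) (hA2 : ∀ β, I2 A β) :
    ∀ z x y : L, Le A x y → Le A y z → Le A x z := by
  have H : ∀ s : WithBot W, ∀ z : L, stg z = s → ∀ x y, Le A x y → Le A y z → Le A x z := by
    intro s
    induction s using WellFoundedLT.induction with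
    | ind s ih =>
      intro z hz x y hxy hyz
      cases hyz with
      | bot =>
        rw [le_none_iff.1 hxy]
        exact Le.bot _
      | @chain β k m hkm =>
        rcases le_some_iff.1 hxy with ⟨k', hk', rfl⟩ | h
        · exact Le.chain (hk'.trans hkm)
        · have h2 : Le A (A β k) (A β m) := hA2 β k m hkm
          have h3 : Le A x (A β m) := by
            refine ih (stg (A β m)) ?_ (A β m) rfl x (A β k) h h2
            rw [← hz]; exact hA1 β m
          exact Le.step h3
      | @step _ β m h =>
        have h3 : Le A x (A β m) := by
          refine ih (stg (A β m)) ?_ (A β m) rfl x y hxy h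
          rw [← hz]; exact hA1 β m
        exact Le.step h3
  exact fun z x y h1 h2 => H (stg z) z rfl x y h1 h2

theorem le_antisymm' {A : W → ℕ → L} (hA1 : ∀ β, I1 A β) {x y : L}
    (hxy : Le A x y) (hyx : Le A y x) : x = y := by
  have hs : stg x = stg y := le_antisymm (stg_mono hA1 hxy) (stg_mono hA1 hyx)
  cases x with
  | none => cases y with
    | none => rfl
    | some p => simp [stg] at hs
  | some p => cases y with
    | none => simp [stg] at hs
    | some q =>
      obtain ⟨β, k⟩ := p
      obtain ⟨β', m⟩ := q
      have hb : β = β' := by simpa [stg] using hs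
      subst hb
      rcases le_some_iff.1 hxy with ⟨k', hk', he⟩ | h
      · rcases le_some_iff.1 hyx with ⟨m', hm', he'⟩ | h'
        · obtain rfl : k = k' := by simpa using he
          obtain rfl : m = m' := by simpa using he'
          exact congrArg _ (congrArg _ (le_antisymm hk' hm'))
        · have := stg_mono hA1 h'
          have h2 := hA1 β k
          simp only [stg_some] at this
          exact absurd (this.trans_lt h2) (lt_irrefl _)
      · have := stg_mono hA1 h
        have h2 := hA1 β m
        simp only [stg_some] at this
        exact absurd (this.trans_lt h2) (lt_irrefl _)

/-- Agreement: if two families agree strictly below `b`, the orders agree on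
targets of stage `< b`. -/
theorem le_congr {A A' : W → ℕ → L} (hA : ∀ β, I1 A β) (hA' : ∀ β, I1 A' β)
    (b : WithBot W) (hag : ∀ γ : W, (γ : WithBot W) < b → A γ = A' γ) :
    ∀ y : L, stg y < b → ∀ x : L, (Le A x y ↔ Le A' x y) := by
  have H : ∀ s : WithBot W, ∀ y : L, stg y = s → s < b → ∀ x, (Le A x y ↔ Le A' x y) := by
    intro s
    induction s using WellFoundedLT.induction with
    | ind s ih =>
      intro y hy hsb x
      cases y with
      | none => simp [le_none_iff]
      | some p =>
        obtain ⟨β, m⟩ := p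
        have hβb : (β : WithBot W) < b := by rw [← hy] at hsb; exact hsb
        have hval : A β m = A' β m := by rw [hag β hβb]
        rw [le_some_iff, le_some_iff, hval]
        have h1 : stg (A' β m) < s := by
          rw [← hy]
          have := hA' β m
          rw [← hval] at this ⊢
          rw [hval]; exact hA' β m
        constructor
        · rintro (h | h)
          · exact Or.inl h
          · exact Or.inr ((ih (stg (A' β m)) h1 _ rfl (h1.trans hsb) x).1 h)
        · rintro (h | h)
          · exact Or.inl h
          · exact Or.inr ((ih (stg (A' β m)) h1 _ rfl (h1.trans hsb) x).2 h)
  exact fun y hy x => H (stg y) y rfl hy x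

/-- `f` is a good cofinal sequence for stage `β`. -/
def GoodAt (A : W → ℕ → L) (β : W) (f : ℕ → L) : Prop :=
  (∀ n, stg (f n) < (β : WithBot W)) ∧ (∀ k m, k ≤ m → Le A (f k) (f m)) ∧
  (∀ x : L, stg x < (β : WithBot W) → ∃ n, Le A x (f n))

theorem directed_below {A : W → ℕ → L} (hA1 : ∀ γ, I1 A γ) (hA2 : ∀ γ, I2 A γ) (β : W)
    (h3 : ∀ γ : W, γ < β → I3 A γ) :
    ∀ x y : L, stg x < (β : WithBot W) → stg y < (β : WithBot W) →
      ∃ z : L, stg z < (β : WithBot W) ∧ Le A x z ∧ Le A y z := by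
  have key : ∀ (γ δ : W) (k m : ℕ), δ ≤ γ → (γ : WithBot W) < (β : WithBot W) →
      ∃ z : L, stg z < (β : WithBot W) ∧ Le A (some (γ, k)) z ∧ Le A (some (δ, m)) z := by
    intro γ δ k m hδγ hγβ
    rcases eq_or_lt_of_le hδγ with h | hlt
    · cases h
      exact ⟨some (γ, max k m), hγβ, Le.chain (le_max_left _ _), Le.chain (le_max_right _ _)⟩
    · have hγβ' : γ < β := by exact_mod_cast hγβ
      obtain ⟨n, hn⟩ := h3 γ hγβ' (some (δ, m)) (by simp only [stg_some]; exact_mod_cast hlt)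
      refine ⟨some (γ, max k n), hγβ, Le.chain (le_max_left _ _), ?_⟩
      refine Le.step (le_trans' hA1 hA2 _ _ _ hn (hA2 γ n (max k n) (le_max_right _ _)))
  intro x y hx hy
  cases x with
  | none => exact ⟨y, hy, Le.bot _, le_refl' A y⟩
  | some p =>
    obtain ⟨γ, k⟩ := p
    cases y with
    | none => exact ⟨some (γ, k), hx, le_refl' A _, Le.bot _⟩
    | some q =>
      obtain ⟨δ, m⟩ := q
      rcases le_total δ γ with h | h
      · exact key γ δ k m h hx
      · obtain ⟨z, h1, h2, h3'⟩ := key δ γ m k h hy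
        exact ⟨z, h1, h3', h2⟩

theorem exists_goodAt {A : W → ℕ → L} (hA1 : ∀ γ, I1 A γ) (hA2 : ∀ γ, I2 A γ) (β : W)
    (h3 : ∀ γ : W, γ < β → I3 A γ) : ∃ f, GoodAt A β f := by
  classical
  set S : Set L := {x : L | stg x < (β : WithBot W)} with hS
  have hScount : S.Countable := by
    have hsub : S ⊆ insert none ((fun p : W × ℕ => some p) '' (Set.Iio β ×ˢ (Set.univ : Set ℕ))) := by
      rintro x hx
      cases x with
      | none => exact Set.mem_insert _ _
      | some p =>
        obtain ⟨γ, n⟩ := p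
        refine Set.mem_insert_of_mem _ ⟨(γ, n), ⟨?_, Set.mem_univ _⟩, rfl⟩
        have : (γ : WithBot W) < (β : WithBot W) := hx
        exact_mod_cast this
    exact Set.Countable.mono hsub
      (Set.Countable.insert _ (Set.Countable.image ((countable_Iio β).prod Set.countable_univ) _))
  have hSne : S.Nonempty := ⟨none, by simp [hS, stg]⟩
  obtain ⟨e, he⟩ := hScount.exists_eq_range hSne
  have hmem : ∀ n, stg (e n) < (β : WithBot W) := by
    intro n
    have : e n ∈ S := by rw [he]; exact ⟨n, rfl⟩
    exact this
  have dir := directed_below hA1 hA2 β h3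
  -- build the monotone dominating sequence
  have step : ∀ z : {z : L // stg z < (β : WithBot W)}, ∀ n : ℕ,
      ∃ z' : L, stg z' < (β : WithBot W) ∧ Le A z.1 z' ∧ Le A (e n) z' := by
    intro z n
    exact dir z.1 (e n) z.2 (hmem n)
  let g : ℕ → {z : L // stg z < (β : WithBot W)} := fun n =>
    Nat.rec (⟨e 0, hmem 0⟩ : {z : L // stg z < (β : WithBot W)})
      (fun n z => ⟨Classical.choose (step z (n + 1)),
        (Classical.choose_spec (step z (n + 1))).1⟩) n
  have hg_succ : ∀ n, Le A (g n).1 (g (n + 1)).1 ∧ Le A (e (n + 1)) (g (n + 1)).1 := by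
    intro n
    exact ⟨(Classical.choose_spec (step (g n) (n + 1))).2.1,
      (Classical.choose_spec (step (g n) (n + 1))).2.2⟩
  refine ⟨fun n => (g n).1, fun n => (g n).2, ?_, ?_⟩
  · intro k m hkm
    induction m with
    | zero => cases Nat.le_zero.1 hkm; exact le_refl' A _
    | succ m ih =>
      rcases Nat.lt_succ_iff_lt_or_eq.1 (Nat.lt_succ_of_le hkm) with h | rfl
      · exact le_trans' hA1 hA2 _ _ _ (ih (Nat.lt_succ_iff.1 h)) (hg_succ m).1
      · exact le_refl' A _
  · intro x hx
    have : x ∈ S := hx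
    rw [he] at this
    obtain ⟨n, rfl⟩ := this
    cases n with
    | zero => exact ⟨0, le_refl' A _⟩
    | succ n => exact ⟨n + 1, (hg_succ n).2⟩

theorem exists_choice (β : W) (fam : W → ℕ → L) :
    ∃ f : ℕ → L,
      ((∀ γ, ¬ γ < β → fam γ = fun _ => none) ∧
        (∀ γ : W, γ < β → GoodAt fam γ (fam γ))) → GoodAt fam β f := by
  by_cases H : (∀ γ, ¬ γ < β → fam γ = fun _ => none) ∧
      (∀ γ : W, γ < β → GoodAt fam γ (fam γ))
  · obtain ⟨Hnone, Hgood⟩ := H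
    have hA1 : ∀ γ, I1 fam γ := by
      intro γ m
      by_cases h : γ < β
      · exact (Hgood γ h).1 m
      · rw [Hnone γ h]; simpa [stg] using WithBot.bot_lt_coe γ
    have hA2 : ∀ γ, I2 fam γ := by
      intro γ k m hkm
      by_cases h : γ < β
      · exact (Hgood γ h).2.1 k m hkm
      · rw [Hnone γ h]; exact Le.bot _
    have h3 : ∀ γ : W, γ < β → I3 fam γ := fun γ h => (Hgood γ h).2.2
    obtain ⟨f, hf⟩ := exists_goodAt hA1 hA2 β h3
    exact ⟨f, fun _ => hf⟩
  · exact ⟨fun _ => none, fun h => absurd h H⟩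

/-- The family of cofinal sequences, by transfinite recursion. -/
noncomputable def A : W → ℕ → L :=
  WellFounded.fix (wellFounded_lt)
    (fun β prev => Classical.choose (exists_choice β
      (fun γ n => if h : γ < β then prev γ h n else none)))

/-- The truncation of `A` strictly below `β`. -/
noncomputable def fam (β : W) : W → ℕ → L := fun γ n => if h : γ < β then A γ n else none

theorem A_eq (β : W) : A β = Classical.choose (exists_choice β (fam β)) := by
  rw [A, WellFounded.fix_eq]
  rfl

theorem fam_I1_of (β : W) (h : ∀ γ : W, γ < β → ∀ n, stg (A γ n) < (γ : WithBot W)) :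
    ∀ δ, I1 (fam β) δ := by
  intro δ m
  by_cases hd : δ < β
  · rw [fam]; simp only [hd, dif_pos]; exact h δ hd m
  · rw [fam]; simp only [hd, dif_neg, not_false_iff, stg, WithBot.bot_lt_coe]

theorem goodAt_A : ∀ β : W, GoodAt (fam β) β (A β) := by
  intro β
  induction β using WellFoundedLT.induction with
  | ind β ih =>
    rw [A_eq β]
    apply Classical.choose_spec (exists_choice β (fam β))
    constructor
    · intro γ h
      funext n
      rw [fam]; simp [h]
    · intro γ hγβ
      have hgood := ih γ hγβ
      have hfamγ : fam β γ = A γ := by funext n; rw [fam]; simp [hγβ]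
      -- stage bounds below β, from the inductive hypotheses
      have hstg : ∀ δ : W, δ < β → ∀ n, stg (A δ n) < (δ : WithBot W) := fun δ hδ => (ih δ hδ).1
      have hstgγ : ∀ δ : W, δ < γ → ∀ n, stg (A δ n) < (δ : WithBot W) :=
        fun δ hδ => hstg δ (hδ.trans hγβ)
      have hI1β : ∀ δ, I1 (fam β) δ := fam_I1_of β hstg
      have hI1γ : ∀ δ, I1 (fam γ) δ := fam_I1_of γ hstgγ
      have hag : ∀ δ : W, (δ : WithBot W) < (γ : WithBot W) → fam γ δ = fam β δ := by
        intro δ hδ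
        have hδγ : δ < γ := by exact_mod_cast hδ
        funext n
        rw [fam, fam]
        simp [hδγ, hδγ.trans hγβ]
      have hcongr := le_congr hI1γ hI1β (γ : WithBot W) hag
      rw [hfamγ]
      refine ⟨hgood.1, ?_, ?_⟩
      · intro k m hkm
        exact (hcongr (A γ m) (hgood.1 m) (A γ k)).1 (hgood.2.1 k m hkm)
      · intro x hx
        obtain ⟨n, hn⟩ := hgood.2.2 x hx
        exact ⟨n, (hcongr (A γ n) (hgood.1 n) x).1 hn⟩

theorem hI1 : ∀ β, I1 A β := fun β => (goodAt_A β).1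

theorem A_fam_agree (β : W) : ∀ γ : W, (γ : WithBot W) < (β : WithBot W) → fam β γ = A γ := by
  intro γ hγ
  have h : γ < β := by exact_mod_cast hγ
  funext n
  rw [fam]; simp [h]

theorem famI1 (β : W) : ∀ δ, I1 (fam β) δ :=
  fam_I1_of β (fun δ _ => hI1 δ)

theorem le_fam_iff (β : W) {x y : L} (hy : stg y < (β : WithBot W)) :
    Le (fam β) x y ↔ Le A x y :=
  le_congr (famI1 β) hI1 (β : WithBot W) (A_fam_agree β) y hy x

theorem hI2 : ∀ β, I2 A β := by
  intro β k m hkm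
  exact (le_fam_iff β (hI1 β m)).1 ((goodAt_A β).2.1 k m hkm)

theorem hI3 : ∀ β, I3 A β := by
  intro β x hx
  obtain ⟨n, hn⟩ := (goodAt_A β).2.2 x hx
  exact ⟨n, (le_fam_iff β (hI1 β n)).1 hn⟩

/-- The partial order on `L`. -/
noncomputable instance : PartialOrder L where
  le := Le A
  lt := fun x y => Le A x y ∧ ¬ Le A y x
  lt_iff_le_not_ge := fun _ _ => Iff.rfl
  le_refl := le_refl' A
  le_trans := fun a b c h1 h2 => le_trans' hI1 hI2 c a b h1 h2
  le_antisymm := fun a b h1 h2 => le_antisymm' hI1 h1 h2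

instance (priority := 2000) : LE L := Preorder.toLE

theorem le_def {x y : L} : x ≤ y ↔ Le A x y := Iff.rfl

theorem iic_finite (x : L) : (Set.Iic x).Finite := by
  have H : ∀ s : WithBot W, ∀ x : L, stg x = s → (Set.Iic x).Finite := by
    intro s
    induction s using WellFoundedLT.induction with
    | ind s ih =>
      intro x hx
      cases x with
      | none =>
        have : Set.Iic (none : L) ⊆ {none} := by
          intro y hy
          exact le_none_iff.1 hy
        exact Set.Finite.subset (Set.finite_singleton _) this
      | some p =>
        obtain ⟨β, m⟩ := p
        have hsub : Set.Iic (some (β, m) : L) ⊆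
            ((fun k => (some (β, k) : L)) '' Set.Iic m) ∪ Set.Iic (A β m) := by
          intro y hy
          rcases le_some_iff.1 hy with ⟨k, hk, rfl⟩ | h
          · exact Or.inl ⟨k, hk, rfl⟩
          · exact Or.inr h
        refine Set.Finite.subset (Set.Finite.union ((Set.finite_Iic m).image _) ?_) hsub
        refine ih (stg (A β m)) ?_ (A β m) rfl
        rw [← hx]
        exact hI1 β m
  exact H (stg x) x rfl

theorem exists_ge_in_chain {x : L} {β : W} (m : ℕ) (hx : stg x ≤ (β : WithBot W)) :
    ∃ n, m ≤ n ∧ Le A x (some (β, n)) := by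
  cases x with
  | none => exact ⟨m, le_rfl, Le.bot _⟩
  | some p =>
    obtain ⟨γ, k⟩ := p
    rcases eq_or_lt_of_le hx with h | h
    · have hγβ : γ = β := by simpa [stg] using h
      subst hγβ
      exact ⟨max k m, le_max_right _ _, Le.chain (le_max_left _ _)⟩
    · obtain ⟨n₀, hn₀⟩ := hI3 β (some (γ, k)) h
      refine ⟨max n₀ m, le_max_right _ _, Le.step ?_⟩
      exact le_trans' hI1 hI2 _ _ _ hn₀ (hI2 β n₀ (max n₀ m) (le_max_left _ _))

theorem exists_lub (x y : L) : ∃ s, x ≤ s ∧ y ≤ s ∧ ∀ z, x ≤ z → y ≤ z → s ≤ z := by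
  classical
  -- core: y = some (β, m) with stg x ≤ β
  have core : ∀ (β : W) (m : ℕ) (x : L), stg x ≤ (β : WithBot W) →
      ∃ s, x ≤ s ∧ (some (β, m) : L) ≤ s ∧ ∀ z, x ≤ z → (some (β, m) : L) ≤ z → s ≤ z := by
    intro β m x hx
    have hex := exists_ge_in_chain (x := x) (β := β) m hx
    let j := Nat.find hex
    have hj := Nat.find_spec hex
    refine ⟨some (β, j), hj.2, Le.chain hj.1, ?_⟩
    have H : ∀ s' : WithBot W, ∀ z : L, stg z = s' → Le A x z → Le A (some (β, m)) z →
        Le A (some (β, j)) z := by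
      intro s'
      induction s' using WellFoundedLT.induction with
      | ind s' ih =>
        intro z hz hxz hyz
        cases z with
        | none => exact absurd (le_none_iff.1 hyz) (by simp)
        | some q =>
          obtain ⟨γ, i⟩ := q
          have hβγ : (β : WithBot W) ≤ (γ : WithBot W) := stg_mono hI1 hyz
          rcases eq_or_lt_of_le hβγ with hEq | hLt
          · have : β = γ := by exact_mod_cast hEq
            subst this
            rcases le_some_iff.1 hyz with ⟨k', hk', he⟩ | hstep
            · obtain rfl : m = k' := by simpa using he
              have : j ≤ i := Nat.find_min' hex ⟨hk', hxz⟩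
              exact Le.chain this
            · have h1 := stg_mono hI1 hstep
              have h2 := hI1 β i
              simp only [stg_some] at h1
              exact absurd (h1.trans_lt h2) (lt_irrefl _)
          · rcases le_some_iff.1 hyz with ⟨k', _, he⟩ | hstep
            · obtain ⟨rfl, -⟩ : β = γ ∧ m = k' := by
                constructor
                · exact congrArg (fun o => o.elim β Prod.fst) he
                · exact congrArg (fun o => o.elim m Prod.snd) he
              exact absurd hLt (lt_irrefl _)
            · have hx2 : Le A x (A γ i) := by
                rcases le_some_iff.1 hxz with ⟨k'', _, rfl⟩ | h'
                · have : (γ : WithBot W) ≤ (β : WithBot W) := hx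
                  exact absurd (this.trans_lt hLt) (lt_irrefl _)
                · exact h'
              refine Le.step (ih (stg (A γ i)) ?_ (A γ i) rfl hx2 hstep)
              rw [← hz]
              exact hI1 γ i
    exact fun z => H (stg z) z rfl
  cases y with
  | none =>
    exact ⟨x, le_refl' A x, Le.bot x, fun z hz _ => hz⟩
  | some q =>
    obtain ⟨β, m⟩ := q
    rcases le_total (stg x) ((β : WithBot W)) with h | h
    · exact core β m x h
    · cases x with
      | none => exact ⟨some (β, m), Le.bot _, le_refl' A _, fun z _ h2 => h2⟩
      | some p =>
        obtain ⟨γ, k⟩ := p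
        obtain ⟨s, h1, h2, h3⟩ := core γ k (some (β, m)) h
        exact ⟨s, h2, h1, fun z hz1 hz2 => h3 z hz2 hz1⟩

theorem exists_glb (x y : L) : ∃ g, g ≤ x ∧ g ≤ y ∧ ∀ z, z ≤ x → z ≤ y → z ≤ g := by
  classical
  set D : Set L := Set.Iic x ∩ Set.Iic y with hD
  have hfin : D.Finite := (iic_finite x).subset Set.inter_subset_left
  have hne : D.Nonempty := ⟨none, Le.bot x, Le.bot y⟩
  obtain ⟨g, hg, hgmax⟩ := hfin.exists_maximalFor id D hne
  refine ⟨g, hg.1, hg.2, ?_⟩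
  intro z hz1 hz2
  obtain ⟨s, hs1, hs2, hs3⟩ := exists_lub z g
  have hsD : s ∈ D := ⟨hs3 x hz1 hg.1, hs3 y hz2 hg.2⟩
  have : g = s := le_antisymm hs2 (hgmax hsD hs2)
  rw [this]
  exact hs1

/-- The lattice structure. -/
noncomputable instance : Lattice L :=
  { (inferInstance : PartialOrder L) with
    sup := fun x y => Classical.choose (exists_lub x y)
    le_sup_left := fun x y => (Classical.choose_spec (exists_lub x y)).1
    le_sup_right := fun x y => (Classical.choose_spec (exists_lub x y)).2.1
    sup_le := fun x y z h1 h2 => (Classical.choose_spec (exists_lub x y)).2.2 z h1 h2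
    inf := fun x y => Classical.choose (exists_glb x y)
    inf_le_left := fun x y => (Classical.choose_spec (exists_glb x y)).1
    inf_le_right := fun x y => (Classical.choose_spec (exists_glb x y)).2.1
    le_inf := fun a b c h1 h2 => (Classical.choose_spec (exists_glb b c)).2.2 a h1 h2 }

instance (priority := 2000) : LT L := Preorder.toLT

theorem lt_def {x y : L} : x < y ↔ Le A x y ∧ ¬ Le A y x := Iff.rfl

theorem covers_le_two (x : L) : {b : L | b ⋖ x}.ncard ≤ 2 := by
  cases x with
  | none =>
    have : {b : L | b ⋖ (none : L)} = ∅ := by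
      ext b
      simp only [Set.mem_setOf_eq, Set.mem_empty_iff_false, iff_false]
      intro h
      have hb := h.1.le
      have := le_none_iff.1 hb
      subst this
      exact h.1.ne rfl
    rw [this]
    simp
  | some p =>
    obtain ⟨β, m⟩ := p
    have hsub : {b : L | b ⋖ (some (β, m) : L)} ⊆ {A β m, some (β, m - 1)} := by
      intro b hb
      have hlt : b < some (β, m) := hb.1
      rcases le_some_iff.1 hlt.le with ⟨k, hk, rfl⟩ | h
      · have hkm : k < m := lt_of_le_of_ne hk (by
          intro h
          exact hlt.ne (by rw [h]))
        have hm : 0 < m := Nat.pos_of_ne_zero (by rintro rfl; exact Nat.not_lt_zero k hkm)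
        have hc : (some (β, m - 1) : L) < some (β, m) := by
          refine lt_of_le_of_ne (Le.chain (Nat.sub_le m 1)) ?_
          simp only [ne_eq, Option.some.injEq, Prod.mk.injEq, true_and]
          omega
        have hbc : (some (β, k) : L) ≤ some (β, m - 1) := Le.chain (by omega)
        rcases eq_or_lt_of_le hbc with he | hlt2
        · exact Or.inr he
        · exact absurd hc (hb.2 hlt2)
      · have hAx : A β m < some (β, m) := by
          refine lt_of_le_of_ne (Le.step (le_refl' A _)) ?_
          intro he
          have := hI1 β m
          rw [he] at this
          simp only [stg_some] at this
          exact absurd this (lt_irrefl _)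
        have hble : b ≤ A β m := h
        rcases eq_or_lt_of_le hble with he | hlt2
        · exact Or.inl he
        · exact absurd hAx (hb.2 hlt2)
    calc {b : L | b ⋖ (some (β, m) : L)}.ncard
        ≤ ({A β m, some (β, m - 1)} : Set L).ncard :=
          Set.ncard_le_ncard hsub ((Set.finite_singleton _).insert _)
      _ ≤ 2 := le_trans (Set.ncard_insert_le _ _) (by simp)

theorem mk_L : #L = Cardinal.aleph 1 := by
  have h1 : #L = #(W × ℕ) + 1 := Cardinal.mk_option
  have h2 : #(W × ℕ) = Cardinal.aleph 1 := by
    rw [Cardinal.mk_prod, Cardinal.lift_id, Cardinal.lift_id, mk_W, Cardinal.mk_nat]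
    exact Cardinal.mul_eq_left (Cardinal.aleph0_le_aleph 1) (Cardinal.aleph0_le_aleph 1)
      Cardinal.aleph0_ne_zero
  rw [h1, h2]
  exact Cardinal.add_one_eq (Cardinal.aleph0_le_aleph 1)

end
end TwoLadder


/-- There exists a 2-ladder of cardinality ℵ₁. -/
theorem exists_two_ladder_of_card_aleph_one :
    ∃ (L : Type) (_ : Lattice L), Cardinal.mk L = Cardinal.aleph 1 ∧ IsLadder 2 L := by
  refine ⟨TwoLadder.L, inferInstance, TwoLadder.mk_L, fun a => ?_⟩
  exact ⟨TwoLadder.iic_finite a, TwoLadder.covers_le_two a⟩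
end

section
/- Every k-ladder has cardinality at most ℵ_{k-1}. -/
universe u

/-- Auxiliary bound: `1` for `k = 0` and `ℵ_{k-1}` for `k ≥ 1`. -/
noncomputable def ladderBound : ℕ → Cardinal.{u}
  | 0 => 1
  | (n+1) => Cardinal.aleph n

/-- In a poset where `Set.Iic q` is finite, any `p < q` lies below a lower cover of `q`. -/
lemma exists_le_covBy {L : Type*} [PartialOrder L] {p q : L}
    (hfin : (Set.Iic q).Finite) (h : p < q) : ∃ c, p ≤ c ∧ c ⋖ q := by
  obtain ⟨c, hc, hmax⟩ := Set.Finite.exists_maximalFor id {z | p ≤ z ∧ z < q}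
      (hfin.subset fun z hz => le_of_lt hz.2) ⟨p, le_rfl, h⟩
  refine ⟨c, hc.1, hc.2, fun w hcw hwq => ?_⟩
  exact (ne_of_lt hcw) (le_antisymm hcw.le (hmax ⟨hc.1.trans hcw.le, hwq⟩ hcw.le))

/-- A map with finite fibers from an infinite type has infinite codomain,
and the cardinality inequality. -/
lemma mk_le_mul_aleph0_of_finite_fibers {α β : Type u} (f : α → β)
    (hfib : ∀ b : β, (f ⁻¹' {b}).Finite) : Cardinal.mk α ≤ Cardinal.mk β * Cardinal.aleph0 := by
  have h1 : Cardinal.mk α = Cardinal.sum (fun b : β => Cardinal.mk (f ⁻¹' {b})) := by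
    rw [← Cardinal.mk_sigma]
    exact Cardinal.mk_congr (Equiv.sigmaFiberEquiv f).symm
  rw [h1, ← Cardinal.sum_const']
  refine Cardinal.sum_le_sum _ _ (fun b => ?_)
  haveI := (hfib b).to_subtype
  exact (Cardinal.lt_aleph0_of_finite _).le

lemma ladder_aux : ∀ (k : ℕ) (L : Type u) [Lattice L], IsLadder k L →
    Cardinal.mk L ≤ ladderBound.{u} k := by
  intro k
  induction k with
  | zero =>
    intro L _ h
    show Cardinal.mk L ≤ 1
    rw [Cardinal.le_one_iff_subsingleton]
    refine ⟨fun x y => ?_⟩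
    by_contra hxy
    -- produce a strict pair p < q
    have hpq : ∃ p q : L, p < q := by
      by_cases hle : x ≤ y
      · exact ⟨x, y, lt_of_le_of_ne hle hxy⟩
      · exact ⟨x ⊓ y, x, lt_of_le_of_ne inf_le_left (fun he => hle (he ▸ inf_le_right))⟩
    obtain ⟨p, q, hpq⟩ := hpq
    obtain ⟨c, _, hc⟩ := exists_le_covBy (h q).1 hpq
    have hfinC : {b : L | b ⋖ q}.Finite := (h q).1.subset (fun d hd => hd.1.le)
    have h1 : 0 < {b : L | b ⋖ q}.ncard := (Set.ncard_pos hfinC).mpr ⟨c, hc⟩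
    have h2 := (h q).2
    omega
  | succ j IH =>
    intro L _ hL
    by_contra hcon
    push_neg at hcon
    have hcon' : Cardinal.aleph j < Cardinal.mk L := by
      simpa [ladderBound] using hcon
    classical
    have hfin : ∀ x : L, (Set.Iic x).Finite := fun x => (hL x).1
    obtain ⟨Y, hY⟩ := Cardinal.le_mk_iff_exists_set.mp hcon'.le
    have hYinf : Infinite ↥Y := Cardinal.infinite_iff.mpr
      (by rw [hY]; exact Cardinal.aleph0_le_aleph _)
    obtain ⟨y₀, hy₀⟩ : Y.Nonempty := Set.nonempty_coe_sort.mp inferInstance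
    -- T : closure of Y under finite sups
    set T : Set L := {x | ∃ (F : Finset ↥Y) (hF : F.Nonempty),
        x = F.sup' hF (fun v => (v : L))} with hTdef
    have hYT : Y ⊆ T := by
      intro x hx
      exact ⟨{⟨x, hx⟩}, Finset.singleton_nonempty _, by simp⟩
    have hT : ∀ x ∈ T, ∀ y ∈ T, x ⊔ y ∈ T := by
      rintro x ⟨F, hF, rfl⟩ y ⟨G, hG, rfl⟩
      exact ⟨F ∪ G, hF.mono Finset.subset_union_left,
        (Finset.sup'_union hF hG _).symm⟩
    have hTne : T.Nonempty := ⟨y₀, hYT hy₀⟩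
    have hTcard : Cardinal.mk ↥T ≤ Cardinal.aleph j := by
      have hsub : T ⊆ Set.range (fun F : Finset ↥Y =>
          if hF : F.Nonempty then F.sup' hF (fun v => (v : L)) else (y₀ : L)) := by
        rintro x ⟨F, hF, rfl⟩
        exact ⟨F, by dsimp only; rw [dif_pos hF]⟩
      calc Cardinal.mk ↥T ≤ Cardinal.mk ↥(Set.range _) := Cardinal.mk_le_mk_of_subset hsub
        _ ≤ Cardinal.mk (Finset ↥Y) := Cardinal.mk_range_le
        _ = Cardinal.mk ↥Y := Cardinal.mk_finset_of_infinite _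
        _ = Cardinal.aleph j := hY
    -- the downset of T is small, pick a outside of it
    have hD : Cardinal.mk ↥(⋃ t ∈ T, Set.Iic t) ≤ Cardinal.aleph j := by
      refine le_trans (Cardinal.mk_biUnion_le _ _) ?_
      haveI : Nonempty ↥T := hTne.to_subtype
      have h1 : ⨆ x : ↥T, Cardinal.mk ↥(Set.Iic (x : L)) ≤ Cardinal.aleph0 := by
        refine ciSup_le' (fun x => ?_)
        haveI := (hfin (x : L)).to_subtype
        exact (Cardinal.lt_aleph0_of_finite _).le
      calc Cardinal.mk ↥T * (⨆ x : ↥T, Cardinal.mk ↥(Set.Iic (x : L)))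
          ≤ Cardinal.aleph j * Cardinal.aleph0 := mul_le_mul' hTcard h1
        _ = Cardinal.aleph j := Cardinal.mul_eq_left (Cardinal.aleph0_le_aleph _)
            (Cardinal.aleph0_le_aleph _) Cardinal.aleph0_ne_zero
    obtain ⟨a, haD⟩ : ∃ a : L, a ∉ (⋃ t ∈ T, Set.Iic t) := by
      by_contra hc
      push_neg at hc
      have : Cardinal.mk L ≤ Cardinal.aleph j := by
        calc Cardinal.mk L = Cardinal.mk ↥(Set.univ : Set L) := Cardinal.mk_univ.symm
          _ ≤ Cardinal.mk ↥(⋃ t ∈ T, Set.Iic t) :=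
              Cardinal.mk_le_mk_of_subset (fun x _ => hc x)
          _ ≤ Cardinal.aleph j := hD
      exact absurd this (not_le.mpr hcon')
    have ha : ∀ t ∈ T, ¬ a ≤ t := fun t ht hle => haD (Set.mem_biUnion ht hle)
    -- the set M
    set M : Set L := insert a ((fun t => a ⊔ t) '' T) with hM
    have haM : a ∈ M := Set.mem_insert _ _
    have hge : ∀ x ∈ M, a ≤ x := by
      rintro x (rfl | ⟨t, ht, rfl⟩)
      · exact le_rfl
      · exact le_sup_left
    have hsupM : ∀ x ∈ M, ∀ y ∈ M, x ⊔ y ∈ M := by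
      rintro x (rfl | ⟨t, ht, rfl⟩) y (rfl | ⟨u, hu, rfl⟩)
      · simpa using haM
      · refine Or.inr ⟨u, hu, ?_⟩
        rw [← sup_assoc, sup_idem]
      · refine Or.inr ⟨t, ht, ?_⟩
        rw [sup_comm, ← sup_assoc, sup_idem]
      · refine Or.inr ⟨t ⊔ u, hT t ht u hu, ?_⟩
        rw [sup_sup_sup_comm, sup_idem]
    -- lattice structure on M
    have hinf : ∀ x y : ↥M, ∃ z : ↥M, (z : L) ≤ x ∧ (z : L) ≤ y ∧
        ∀ w : ↥M, (w : L) ≤ x → (w : L) ≤ y → (w : L) ≤ z := by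
      intro x y
      have hBfin : ({z | z ∈ M ∧ z ≤ (x : L) ∧ z ≤ (y : L)}).Finite :=
        (hfin (x : L)).subset (fun z hz => hz.2.1)
      have hBne : hBfin.toFinset.Nonempty :=
        ⟨a, hBfin.mem_toFinset.mpr ⟨haM, hge _ x.2, hge _ y.2⟩⟩
      refine ⟨⟨hBfin.toFinset.sup' hBne id, ?_⟩, ?_, ?_, ?_⟩
      · exact Finset.sup'_mem M hsupM _ hBne id
          (fun z hz => (hBfin.mem_toFinset.mp hz).1)
      · exact Finset.sup'_le hBne id (fun z hz => (hBfin.mem_toFinset.mp hz).2.1)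
      · exact Finset.sup'_le hBne id (fun z hz => (hBfin.mem_toFinset.mp hz).2.2)
      · intro w hw1 hw2
        exact Finset.le_sup' id (hBfin.mem_toFinset.mpr ⟨w.2, hw1, hw2⟩)
    choose infM hinf1 hinf2 hinf3 using hinf
    letI instM : Lattice ↥M :=
      { (inferInstance : PartialOrder ↥M) with
        sup := fun x y => ⟨(x : L) ⊔ (y : L), hsupM _ x.2 _ y.2⟩
        le_sup_left := fun x y => show (x : L) ≤ (x : L) ⊔ (y : L) from le_sup_left
        le_sup_right := fun x y => show (y : L) ≤ (x : L) ⊔ (y : L) from le_sup_right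
        sup_le := fun x y z hx hy => show (x : L) ⊔ (y : L) ≤ (z : L) from sup_le hx hy
        inf := infM
        inf_le_left := fun x y => hinf1 x y
        inf_le_right := fun x y => hinf2 x y
        le_inf := fun x y z hxy hxz => hinf3 y z x hxy hxz }
    -- M is a j-ladder
    have hlad : IsLadder j ↥M := by
      intro y
      constructor
      · have hEq : (Set.Iic y) = Subtype.val ⁻¹' (Set.Iic (y : L)) := rfl
        rw [hEq]
        exact (hfin (y : L)).preimage (Subtype.val_injective.injOn)
      · rcases y.2 with hya | ⟨t, htT, hty⟩
        · -- y = a : no covers, since a is the bottom of M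
          have hempty : {c : ↥M | c ⋖ y} = ∅ := by
            ext c
            simp only [Set.mem_setOf_eq, Set.mem_empty_iff_false, iff_false]
            intro hc
            have h1 : (c : L) < (y : L) := Subtype.coe_lt_coe.mpr hc.1
            rw [hya] at h1
            exact absurd h1 ((hge _ c.2).not_gt)
          rw [hempty, Set.ncard_empty]
          exact Nat.zero_le _
        · -- y = a ⊔ t
          have h1 : ¬ a ≤ t := ha t htT
          have htlt : t < (y : L) := by
            refine lt_of_le_of_ne (hty ▸ le_sup_right) (fun h => h1 ?_)
            rw [h, ← hty]; exact le_sup_left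
          obtain ⟨cstar, htc, hcstar⟩ := exists_le_covBy (hfin _) htlt
          have hac : ¬ a ≤ cstar := by
            intro h
            have : (y : L) ≤ cstar := by
              rw [← hty]; exact sup_le h htc
            exact absurd hcstar.1 this.not_gt
          set W : Set L := {d | d ⋖ (y : L) ∧ a ≤ d} with hW
          set C : Set L := {d | d ⋖ (y : L)} with hC
          have hCfin : C.Finite := (hfin (y : L)).subset (fun d hd => hd.1.le)
          have hWfin : W.Finite := hCfin.subset (fun d hd => hd.1)
          have hWC : W ⊆ C \ {cstar} := by
            rintro d ⟨hd1, hd2⟩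
            exact ⟨hd1, fun h => hac (h ▸ hd2)⟩
          have hWcard : W.ncard ≤ j := by
            have h2 : W.ncard ≤ (C \ {cstar}).ncard :=
              Set.ncard_le_ncard hWC hCfin.diff
            have h3 : (C \ {cstar}).ncard = C.ncard - 1 :=
              Set.ncard_diff_singleton_of_mem (s := C) hcstar
            have h4 : C.ncard ≤ j + 1 := (hL (y : L)).2
            omega
          -- inject M-covers of y into W
          set φ : ↥M → L := fun c =>
            if hc : (c : L) < (y : L) then (exists_le_covBy (hfin _) hc).choose
            else a with hφ
          have hφspec : ∀ c : ↥M, (c : L) < (y : L) →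
              (c : L) ≤ φ c ∧ φ c ⋖ (y : L) := by
            intro c hc
            have := (exists_le_covBy (hfin (y : L)) hc).choose_spec
            rw [hφ]
            simp only [dif_pos hc]
            exact this
          have hmaps : ∀ c ∈ {c : ↥M | c ⋖ y}, φ c ∈ W := by
            intro c hc
            have hlt : (c : L) < (y : L) := Subtype.coe_lt_coe.mpr hc.1
            obtain ⟨hle, hcov⟩ := hφspec c hlt
            exact ⟨hcov, le_trans (hge _ c.2) hle⟩
          have hinj : Set.InjOn φ {c : ↥M | c ⋖ y} := by
            intro c₁ hc₁ c₂ hc₂ heq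
            by_contra hne
            have hlt₁ : (c₁ : L) < (y : L) := Subtype.coe_lt_coe.mpr hc₁.1
            have hlt₂ : (c₂ : L) < (y : L) := Subtype.coe_lt_coe.mpr hc₂.1
            obtain ⟨hle₁, hcov₁⟩ := hφspec c₁ hlt₁
            obtain ⟨hle₂, hcov₂⟩ := hφspec c₂ hlt₂
            rw [heq] at hle₁ hcov₁
            -- e = c₁ ⊔ c₂ inside M
            set e : ↥M := ⟨(c₁ : L) ⊔ (c₂ : L), hsupM _ c₁.2 _ c₂.2⟩ with he
            have helt : e < y := by
              rw [← Subtype.coe_lt_coe]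
              exact lt_of_le_of_lt (sup_le hle₁ hle₂) hcov₂.1
            have hc₁e : c₁ ≤ e := by
              rw [← Subtype.coe_le_coe]
              exact le_sup_left
            have hec₁ : e = c₁ := by
              by_contra hne'
              exact hc₁.2 (lt_of_le_of_ne hc₁e (Ne.symm hne')) helt
            have hc₂c₁ : c₂ ≤ c₁ := by
              rw [← Subtype.coe_le_coe, ← hec₁]
              exact le_sup_right
            have : c₂ < c₁ := lt_of_le_of_ne hc₂c₁ (fun h => hne h.symm)
            exact hc₂.2 this hc₁.1
          calc {c : ↥M | c ⋖ y}.ncard ≤ W.ncard :=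
              Set.ncard_le_ncard_of_injOn φ hmaps hinj hWfin
            _ ≤ j := hWcard
    -- apply the induction hypothesis
    have hMle : Cardinal.mk ↥M ≤ ladderBound.{u} j := IH ↥M hlad
    -- lower bound on the size of M via finite fibers
    set f : ↥Y → ↥M := fun v => ⟨a ⊔ (v : L), Or.inr ⟨(v : L), hYT v.2, rfl⟩⟩ with hf
    have hfib : ∀ z : ↥M, (f ⁻¹' {z}).Finite := by
      intro z
      have hsub : f ⁻¹' {z} ⊆ Subtype.val ⁻¹' (Set.Iic (z : L)) := by
        intro w hw
        have : f w = z := hw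
        have h2 : (w : L) ≤ (z : L) := by
          rw [← congrArg (Subtype.val) this]
          exact le_sup_right
        exact h2
      exact ((hfin (z : L)).preimage (Subtype.val_injective.injOn)).subset hsub
    have hMinf : Infinite ↥M := by
      by_contra hfinM
      rw [not_infinite_iff_finite] at hfinM
      haveI := hfinM
      haveI : ∀ z : ↥M, Finite {x : ↥Y // f x = z} := fun z => (hfib z).to_subtype
      haveI : Finite ↥Y := Finite.of_equiv _ (Equiv.sigmaFiberEquiv f)
      exact absurd (not_finite ↥Y) (by simp)
    have hMge : Cardinal.aleph j ≤ Cardinal.mk ↥M := by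
      have h1 : Cardinal.mk ↥Y ≤ Cardinal.mk ↥M * Cardinal.aleph0 :=
        mk_le_mul_aleph0_of_finite_fibers f hfib
      have h2 : Cardinal.mk ↥M * Cardinal.aleph0 = Cardinal.mk ↥M :=
        Cardinal.mul_eq_left (Cardinal.infinite_iff.mp hMinf) (Cardinal.infinite_iff.mp hMinf)
          Cardinal.aleph0_ne_zero
      rw [← hY]
      rw [h2] at h1
      exact h1
    have hltb : ladderBound.{u} j < Cardinal.aleph j := by
      cases j with
      | zero =>
        show (1 : Cardinal) < Cardinal.aleph 0
        rw [Cardinal.aleph_zero]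
        exact Cardinal.one_lt_aleph0
      | succ i =>
        show Cardinal.aleph i < Cardinal.aleph (i + 1 : ℕ)
        rw [Cardinal.aleph_lt_aleph]
        exact_mod_cast Nat.lt_succ_self i
    exact absurd (hMge.trans hMle) hltb.not_ge

/-- Every `k`-ladder has at most `ℵ_{k-1}` elements. -/
theorem ladder_card_le (k : ℕ) (hk : 1 ≤ k) (L : Type*) [Lattice L] (h : IsLadder k L) :
    Cardinal.mk L ≤ Cardinal.aleph (k - 1) := by
  obtain ⟨j, rfl⟩ : ∃ j, k = j + 1 := ⟨k - 1, (Nat.succ_pred_eq_of_pos hk).symm⟩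
  have hcast : ((j + 1 : ℕ) : Ordinal) - 1 = (j : Ordinal) := by
    rw [← Nat.cast_one (R := Ordinal), ← Ordinal.natCast_sub]
    norm_num
  rw [hcast]
  simpa [ladderBound] using ladder_aux (j + 1) L h
end

section
/- If L is a finite relatively complemented lattice, then the congruence lattice Con L is a Boolean lattice. -/
/-- A congruence of a lattice. -/
structure LatticeCon' (α : Type*) [Lattice α] where
  r : α → α → Prop
  refl : ∀ a, r a a
  symm : ∀ {a b}, r a b → r b a
  trans : ∀ {a b c}, r a b → r b c → r a c
  sup : ∀ {a b c d}, r a b → r c d → r (a ⊔ c) (b ⊔ d)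
  inf : ∀ {a b c d}, r a b → r c d → r (a ⊓ c) (b ⊓ d)

/-- Congruences are ordered by inclusion. -/
instance {α : Type*} [Lattice α] : PartialOrder (LatticeCon' α) where
  le Θ Ψ := ∀ a b, Θ.r a b → Ψ.r a b
  le_refl _ _ _ h := h
  le_trans _ _ _ h1 h2 a b h := h2 a b (h1 a b h)
  le_antisymm Θ Ψ h1 h2 := by
    cases Θ; cases Ψ
    simp only [LatticeCon'.mk.injEq]
    funext a b
    exact propext ⟨h1 a b, h2 a b⟩

/-- A lattice is relatively complemented if every `b` in an interval `[a, c]`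
has a relative complement. -/
def RelComplemented (L : Type*) [Lattice L] : Prop :=
  ∀ a b c : L, a ≤ b → b ≤ c → ∃ x : L, b ⊓ x = a ∧ b ⊔ x = c

namespace LatticeCon'

variable {L : Type*} [Lattice L]

theorem r_comp (θ : LatticeCon' L) {a b : L} (hab : θ.r a b) : θ.r (a ⊓ b) (a ⊔ b) := by
  have h1 : θ.r (a ⊓ b) b := by simpa using θ.inf hab (θ.refl b)
  have h2 : θ.r (a ⊔ b) b := by simpa using θ.sup hab (θ.refl b)
  exact θ.trans h1 (θ.symm h2)

theorem r_of_comp (θ : LatticeCon' L) {a b : L} (hm : θ.r (a ⊓ b) (a ⊔ b)) : θ.r a b := by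
  have ha : θ.r a (a ⊔ b) := by
    have := θ.sup (θ.refl a) hm
    simpa using this
  have hb : θ.r b (a ⊔ b) := by
    have := θ.sup (θ.refl b) hm
    simpa [inf_comm, sup_comm] using this
  exact θ.trans ha (θ.symm hb)

/-- If `θ` relates `m ≤ j`, it relates everything in the interval `[m, j]`. -/
theorem interval (θ : LatticeCon' L) {m j x y : L} (hmj : θ.r m j)
    (hx1 : m ≤ x) (hx2 : x ≤ j) (hy1 : m ≤ y) (hy2 : y ≤ j) : θ.r x y := by
  have hx : θ.r x j := by
    have := θ.sup (θ.refl x) hmj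
    rwa [sup_eq_left.2 hx1, sup_eq_right.2 hx2] at this
  have hy : θ.r y j := by
    have := θ.sup (θ.refl y) hmj
    rwa [sup_eq_left.2 hy1, sup_eq_right.2 hy2] at this
  exact θ.trans hx (θ.symm hy)

/-- Meet of congruences. -/
def infC (θ φ : LatticeCon' L) : LatticeCon' L where
  r a b := θ.r a b ∧ φ.r a b
  refl a := ⟨θ.refl a, φ.refl a⟩
  symm h := ⟨θ.symm h.1, φ.symm h.2⟩
  trans h1 h2 := ⟨θ.trans h1.1 h2.1, φ.trans h1.2 h2.2⟩
  sup h1 h2 := ⟨θ.sup h1.1 h2.1, φ.sup h1.2 h2.2⟩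
  inf h1 h2 := ⟨θ.inf h1.1 h2.1, φ.inf h1.2 h2.2⟩

private theorem rtg_sup (θ φ : LatticeCon' L) {a b : L} (c : L)
    (hab : Relation.ReflTransGen (fun x y => θ.r x y ∨ φ.r x y) a b) :
    Relation.ReflTransGen (fun x y => θ.r x y ∨ φ.r x y) (a ⊔ c) (b ⊔ c) := by
  induction hab with
  | refl => exact .refl
  | tail _ hstep ih =>
    exact ih.tail (hstep.imp (fun hh => θ.sup hh (θ.refl c)) (fun hh => φ.sup hh (φ.refl c)))

private theorem rtg_inf (θ φ : LatticeCon' L) {a b : L} (c : L)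
    (hab : Relation.ReflTransGen (fun x y => θ.r x y ∨ φ.r x y) a b) :
    Relation.ReflTransGen (fun x y => θ.r x y ∨ φ.r x y) (a ⊓ c) (b ⊓ c) := by
  induction hab with
  | refl => exact .refl
  | tail _ hstep ih =>
    exact ih.tail (hstep.imp (fun hh => θ.inf hh (θ.refl c)) (fun hh => φ.inf hh (φ.refl c)))

/-- Join of congruences. -/
def supC (θ φ : LatticeCon' L) : LatticeCon' L where
  r := Relation.ReflTransGen (fun x y => θ.r x y ∨ φ.r x y)
  refl _ := .refl
  symm h := haveI : Std.Symm (fun x y => θ.r x y ∨ φ.r x y) :=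
    ⟨fun _ _ hh => hh.imp θ.symm φ.symm⟩; Relation.ReflTransGen.symmetric.symm _ _ h
  trans h1 h2 := h1.trans h2
  sup {a b c d} h1 h2 := by
    have k1 := rtg_sup θ φ c h1
    have k2 := rtg_sup θ φ b h2
    rw [sup_comm c b, sup_comm d b] at k2
    exact k1.trans k2
  inf {a b c d} h1 h2 := by
    have k1 := rtg_inf θ φ c h1
    have k2 := rtg_inf θ φ b h2
    rw [inf_comm c b, inf_comm d b] at k2
    exact k1.trans k2

instance : Lattice (LatticeCon' L) :=
  { (inferInstance : PartialOrder (LatticeCon' L)) with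
    sup := supC
    inf := infC
    le_sup_left := fun _ _ _ _ hab => .single (Or.inl hab)
    le_sup_right := fun _ _ _ _ hab => .single (Or.inr hab)
    sup_le := fun θ φ ρ h1 h2 a b hab => by
      induction hab with
      | refl => exact ρ.refl a
      | tail _ hstep ih => exact ρ.trans ih (hstep.elim (h1 _ _) (h2 _ _))
    inf_le_left := fun _ _ _ _ hab => hab.1
    inf_le_right := fun _ _ _ _ hab => hab.2
    le_inf := fun _ _ _ h1 h2 a b hab => ⟨h1 a b hab, h2 a b hab⟩ }

theorem inf_r_iff (θ φ : LatticeCon' L) (a b : L) :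
    (θ ⊓ φ).r a b ↔ θ.r a b ∧ φ.r a b := Iff.rfl

theorem sup_r_iff (θ φ : LatticeCon' L) (a b : L) :
    (θ ⊔ φ).r a b ↔ Relation.ReflTransGen (fun x y => θ.r x y ∨ φ.r x y) a b := Iff.rfl

instance : DistribLattice (LatticeCon' L) := by
  refine DistribLattice.ofInfSupLe fun θ φ ρ a b hab => ?_
  obtain ⟨h1, h2⟩ := hab
  set m := a ⊓ b with hm
  set j := a ⊔ b with hj
  have hmjθ : θ.r m j := θ.r_comp h1
  have hmj2 : Relation.ReflTransGen (fun x y => φ.r x y ∨ ρ.r x y) m j :=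
    (supC φ ρ).r_comp h2
  have key : ∀ z, Relation.ReflTransGen (fun x y => φ.r x y ∨ ρ.r x y) m z →
      (θ ⊓ φ ⊔ θ ⊓ ρ).r m ((z ⊔ m) ⊓ j) := by
    intro z hz
    induction hz with
    | refl =>
      have : (m ⊔ m) ⊓ j = m := by rw [sup_idem, inf_eq_left.2 inf_le_sup]
      rw [this]
      exact (θ ⊓ φ ⊔ θ ⊓ ρ).refl m
    | @tail z z' _ hstep ih =>
      refine Relation.ReflTransGen.tail ih ?_
      have hw1 : m ≤ (z ⊔ m) ⊓ j := le_inf le_sup_right inf_le_sup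
      have hw2 : (z ⊔ m) ⊓ j ≤ j := inf_le_right
      have hw1' : m ≤ (z' ⊔ m) ⊓ j := le_inf le_sup_right inf_le_sup
      have hw2' : (z' ⊔ m) ⊓ j ≤ j := inf_le_right
      have hθ : θ.r ((z ⊔ m) ⊓ j) ((z' ⊔ m) ⊓ j) := θ.interval hmjθ hw1 hw2 hw1' hw2'
      cases hstep with
      | inl hφ => exact Or.inl ⟨hθ, φ.inf (φ.sup hφ (φ.refl m)) (φ.refl j)⟩
      | inr hρ => exact Or.inr ⟨hθ, ρ.inf (ρ.sup hρ (ρ.refl m)) (ρ.refl j)⟩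
  have := key j hmj2
  rw [sup_eq_left.2 inf_le_sup, inf_idem] at this
  exact (θ ⊓ φ ⊔ θ ⊓ ρ).r_of_comp this

/-- The bottom congruence: equality. -/
def botC : LatticeCon' L where
  r a b := a = b
  refl _ := rfl
  symm h := h.symm
  trans h1 h2 := h1.trans h2
  sup h1 h2 := by rw [h1, h2]
  inf h1 h2 := by rw [h1, h2]

/-- The top congruence: everything. -/
def topC : LatticeCon' L where
  r _ _ := True
  refl _ := trivial
  symm _ := trivial
  trans _ _ := trivial
  sup _ _ := trivial
  inf _ _ := trivial

instance : BoundedOrder (LatticeCon' L) where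
  top := topC
  bot := botC
  le_top _ _ _ _ := trivial
  bot_le θ a b hab := hab ▸ θ.refl a

theorem bot_r_iff (a b : L) : (⊥ : LatticeCon' L).r a b ↔ a = b := Iff.rfl


section Complement

variable {L : Type*} [Lattice L]

/-- `[a, b]` is a `θ`-trivial interval. -/
def Hp (θ : LatticeCon' L) (a b : L) : Prop :=
  ∀ u v, a ≤ u → u ≤ v → v ≤ b → θ.r u v → u = v

theorem Hp.mono {θ : LatticeCon' L} {a b a' b' : L} (H : Hp θ a b) (ha : a ≤ a') (hb : b' ≤ b) :
    Hp θ a' b' := fun u v h1 h2 h3 huv => H u v (ha.trans h1) h2 (h3.trans hb) huv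

theorem keyUp (h : RelComplemented L) (θ : LatticeCon' L) {u v q : L}
    (H : Hp θ (u ⊓ q) q) (huv : θ.r u v) (h1 : u ≤ v) (h2 : v ≤ q ⊔ u) : u = v := by
  obtain ⟨x, hx1, hx2⟩ := h u v (q ⊔ u) h1 h2
  have hux : u ≤ x := by rw [← hx1]; exact inf_le_right
  have hxq : θ.r x (q ⊔ u) := by
    have := θ.sup (θ.refl x) huv
    rwa [sup_eq_left.2 hux, sup_comm x v, hx2] at this
  have h3 : θ.r (q ⊓ x) q := by
    have := θ.inf (θ.refl q) hxq
    rwa [inf_sup_self] at this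
  have h4 : q ⊓ x = q :=
    H (q ⊓ x) q (le_inf inf_le_right (inf_le_left.trans hux)) inf_le_left le_rfl h3
  have hqx : q ≤ x := inf_eq_left.1 h4
  have hx : x = q ⊔ u := le_antisymm (by rw [← hx2]; exact le_sup_right) (sup_le hqx hux)
  calc u = v ⊓ x := hx1.symm
    _ = v := by rw [hx, inf_eq_left.2 h2]

theorem keyDown (h : RelComplemented L) (θ : LatticeCon' L) {u v q : L}
    (H : Hp θ q (v ⊔ q)) (huv : θ.r u v) (h1 : u ≤ v) (h2 : q ⊓ v ≤ u) : u = v := by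
  obtain ⟨x, hx1, hx2⟩ := h (q ⊓ v) u v h2 h1
  have hxv : x ≤ v := by rw [← hx2]; exact le_sup_right
  have hqvx : θ.r (q ⊓ v) x := by
    have := θ.inf (θ.refl x) huv
    rwa [inf_comm x u, hx1, inf_eq_left.2 hxv] at this
  have h3 : θ.r q (q ⊔ x) := by
    have := θ.sup (θ.refl q) hqvx
    rwa [sup_inf_self] at this
  have h4 : q = q ⊔ x :=
    H q (q ⊔ x) le_rfl le_sup_left (sup_le le_sup_right (hxv.trans le_sup_left)) h3
  have hxq : x ≤ q := sup_eq_left.1 h4.symm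
  have hxu : x ≤ u := by
    have hh : x ≤ q ⊓ v := le_inf hxq hxv
    rw [← hx1] at hh
    exact hh.trans inf_le_left
  exact le_antisymm h1 (by rw [← hx2]; exact sup_le le_rfl hxu)

theorem chainTrans (h : RelComplemented L) {θ : LatticeCon' L} {a b c : L}
    (hab : a ≤ b) (hbc : b ≤ c) (H1 : Hp θ a b) (H2 : Hp θ b c) : Hp θ a c := by
  intro u v h1 h2 h3 huv
  have hmb : u ⊓ b = v ⊓ b :=
    H1 (u ⊓ b) (v ⊓ b) (le_inf h1 hab) (inf_le_inf_right b h2) inf_le_right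
      (θ.inf huv (θ.refl b))
  obtain ⟨x, hx1, hx2⟩ := h (u ⊓ b) u v inf_le_left h2
  have hxv : x ≤ v := by rw [← hx2]; exact le_sup_right
  have hx_r : θ.r (u ⊓ b) x := by
    have := θ.inf (θ.refl x) huv
    rwa [inf_comm x u, hx1, inf_eq_left.2 hxv] at this
  have h5 : θ.r b (x ⊔ b) := by
    have := θ.sup hx_r (θ.refl b)
    rwa [sup_eq_right.2 inf_le_right] at this
  have h6 : b = x ⊔ b :=
    H2 b (x ⊔ b) le_rfl le_sup_right (sup_le (hxv.trans h3) hbc) h5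
  have hxb : x ≤ b := sup_eq_right.1 h6.symm
  have hxu : x ≤ u := by
    have hh : x ≤ v ⊓ b := le_inf hxv hxb
    rw [← hmb, ← hx1] at hh
    exact hh.trans inf_le_left
  exact le_antisymm h2 (by rw [← hx2]; exact sup_le le_rfl hxu)

theorem supTrans (h : RelComplemented L) {θ : LatticeCon' L} {a b : L}
    (H : Hp θ a b) (hab : a ≤ b) (c : L) : Hp θ (a ⊔ c) (b ⊔ c) := by
  intro u v h1 h2 h3 huv
  refine keyUp h θ (q := b) ?_ huv h2 ?_
  · exact H.mono (le_inf (le_sup_left.trans h1) hab) le_rfl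
  · exact h3.trans (sup_le le_sup_left ((le_sup_right.trans h1).trans le_sup_right))
theorem infTrans (h : RelComplemented L) {θ : LatticeCon' L} {a b : L}
    (H : Hp θ a b) (hab : a ≤ b) (c : L) : Hp θ (a ⊓ c) (b ⊓ c) := by
  intro u v h1 h2 h3 huv
  refine keyDown h θ (q := a) ?_ huv h2 ?_
  · exact H.mono le_rfl (sup_le (h3.trans inf_le_left) hab)
  · exact (inf_le_inf_left a (h3.trans inf_le_right)).trans h1

/-- The complementary congruence of `θ`: all pairs whose generated interval is
`θ`-trivial. -/
def psiC (h : RelComplemented L) (θ : LatticeCon' L) : LatticeCon' L where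
  r a b := Hp θ (a ⊓ b) (a ⊔ b)
  refl a := by
    intro u v h1 h2 h3 _
    rw [inf_idem] at h1; rw [sup_idem] at h3
    exact le_antisymm h2 (h3.trans h1)
  symm {a b} H := by
    show Hp θ (b ⊓ a) (b ⊔ a)
    rwa [inf_comm b a, sup_comm b a]
  trans {a b c} H1 H2 := by
    have B : Hp θ (a ⊓ b ⊓ c) (a ⊓ b) := by
      have := infTrans h H2 inf_le_sup (a ⊓ b)
      refine this.mono ?_ ?_
      · exact le_inf (le_inf (inf_le_right.trans inf_le_left)
          (inf_le_left.trans inf_le_left)) (inf_le_left.trans inf_le_right)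
      · exact le_inf (inf_le_right.trans le_sup_left) le_rfl
    have C : Hp θ (a ⊓ b ⊓ c) (a ⊔ b) := chainTrans h inf_le_left inf_le_sup B H1
    have D : Hp θ (a ⊔ b) (a ⊔ b ⊔ c) := by
      have := supTrans h H2 inf_le_sup (a ⊔ b)
      refine this.mono ?_ ?_
      · exact sup_le (inf_le_left.trans le_sup_right) le_rfl
      · exact sup_le (sup_le (le_sup_left.trans le_sup_right)
          (le_sup_left.trans le_sup_left)) (le_sup_right.trans le_sup_left)
    have E : Hp θ (a ⊓ b ⊓ c) (a ⊔ b ⊔ c) :=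
      chainTrans h (inf_le_left.trans inf_le_sup) le_sup_left C D
    exact E.mono (le_inf (inf_le_left.trans inf_le_left) inf_le_right)
      (sup_le (le_sup_left.trans le_sup_left) le_sup_right)
  sup {a b c d} H1 H2 := by
    have F1 : Hp θ ((a ⊓ b) ⊔ (c ⊓ d)) ((a ⊔ b) ⊔ (c ⊓ d)) := supTrans h H1 inf_le_sup (c ⊓ d)
    have F2 : Hp θ ((c ⊓ d) ⊔ (a ⊔ b)) ((c ⊔ d) ⊔ (a ⊔ b)) := supTrans h H2 inf_le_sup (a ⊔ b)
    rw [sup_comm (c ⊓ d) (a ⊔ b)] at F2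
    have G : Hp θ ((a ⊓ b) ⊔ (c ⊓ d)) ((c ⊔ d) ⊔ (a ⊔ b)) :=
      chainTrans h (sup_le (inf_le_sup.trans le_sup_left) le_sup_right)
        (sup_le le_sup_right (inf_le_sup.trans le_sup_left)) F1 F2
    refine G.mono ?_ ?_
    · exact sup_le (le_inf (inf_le_left.trans le_sup_left) (inf_le_right.trans le_sup_left))
        (le_inf (inf_le_left.trans le_sup_right) (inf_le_right.trans le_sup_right))
    · exact sup_le (sup_le (le_sup_left.trans le_sup_right) (le_sup_left.trans le_sup_left))
        (sup_le (le_sup_right.trans le_sup_right) (le_sup_right.trans le_sup_left))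
  inf {a b c d} H1 H2 := by
    have F1 : Hp θ ((a ⊓ b) ⊓ (c ⊔ d)) ((a ⊔ b) ⊓ (c ⊔ d)) := infTrans h H1 inf_le_sup (c ⊔ d)
    have F2 : Hp θ ((c ⊓ d) ⊓ (a ⊓ b)) ((c ⊔ d) ⊓ (a ⊓ b)) := infTrans h H2 inf_le_sup (a ⊓ b)
    rw [inf_comm (c ⊓ d) (a ⊓ b), inf_comm (c ⊔ d) (a ⊓ b)] at F2
    have G : Hp θ ((a ⊓ b) ⊓ (c ⊓ d)) ((a ⊔ b) ⊓ (c ⊔ d)) :=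
      chainTrans h (inf_le_inf_left _ inf_le_sup) (inf_le_inf_right _ inf_le_sup) F2 F1
    refine G.mono ?_ ?_
    · exact le_inf (le_inf (inf_le_left.trans inf_le_left) (inf_le_right.trans inf_le_left))
        (le_inf (inf_le_left.trans inf_le_right) (inf_le_right.trans inf_le_right))
    · exact sup_le (le_inf (inf_le_left.trans le_sup_left) (inf_le_right.trans le_sup_left))
        (le_inf (inf_le_left.trans le_sup_right) (inf_le_right.trans le_sup_right))

end Complement


section Compl

variable {L : Type*} [Lattice L]

theorem psiC_disjoint (h : RelComplemented L) (θ : LatticeCon' L) :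
    Disjoint θ (psiC h θ) := by
  rw [disjoint_iff_inf_le]
  intro a b hab
  obtain ⟨h1, h2⟩ := hab
  have hmj : a ⊓ b = a ⊔ b := h2 (a ⊓ b) (a ⊔ b) le_rfl inf_le_sup le_rfl (θ.r_comp h1)
  show a = b
  exact le_antisymm (le_sup_left.trans (hmj ▸ inf_le_right))
    (le_sup_right.trans (hmj ▸ inf_le_left))

theorem psiC_codisjoint [Fintype L] (h : RelComplemented L) (θ : LatticeCon' L) :
    Codisjoint θ (psiC h θ) := by
  rw [codisjoint_iff_le_sup]
  intro a b _
  -- L is nonempty since we have `a : L`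
  have hne : (Finset.univ : Finset L).Nonempty := ⟨a, Finset.mem_univ a⟩
  set bL : L := Finset.univ.inf' hne id with hbL
  set tL : L := Finset.univ.sup' hne id with htL
  have hbot : ∀ x : L, bL ≤ x := fun x => Finset.inf'_le id (Finset.mem_univ x)
  have htop : ∀ x : L, x ≤ tL := fun x => Finset.le_sup' id (Finset.mem_univ x)
  have main : ∀ x : L, (θ ⊔ psiC h θ).r bL x := by
    intro x
    induction x using WellFoundedLT.induction with
    | _ x ih =>
      rcases eq_or_lt_of_le (hbot x) with hx | hx
      · exact hx ▸ (θ ⊔ psiC h θ).refl bL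
      · -- find a maximal element below x
        obtain ⟨z, hz, hmax⟩ :=
          Set.Finite.exists_maximalFor id {w : L | w < x} (Set.toFinite _) ⟨bL, hx⟩
        simp only [Set.mem_setOf_eq, id] at hz hmax
        have hcov : ∀ w, z < w → w ≤ x → w = x := by
          intro w hzw hwx
          rcases eq_or_lt_of_le hwx with he | hwx'
          · exact he
          · exact absurd (le_antisymm hzw.le (hmax hwx' hzw.le)) hzw.ne
        have step : (θ ⊔ psiC h θ).r z x := by
          by_cases hθ : θ.r z x
          · exact .single (Or.inl hθ)
          · refine .single (Or.inr ?_)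
            show Hp θ (z ⊓ x) (z ⊔ x)
            rw [inf_eq_left.2 hz.le, sup_eq_right.2 hz.le]
            intro u v h1 h2 h3 huv
            rcases eq_or_lt_of_le h2 with he | hlt
            · exact he
            · rcases eq_or_lt_of_le h1 with hu | hu
              · have hv : v = x := hcov v (hu ▸ hlt) h3
                exact absurd (by rw [hu, ← hv]; exact huv) hθ
              · have hu' : u = x := hcov u hu (h2.trans h3)
                exact le_antisymm h2 (h3.trans hu'.ge)
        exact ((ih z hz).trans step)
  have hbt : (θ ⊔ psiC h θ).r bL tL := main tL
  exact (θ ⊔ psiC h θ).interval hbt (hbot a) (htop a) (hbot b) (htop b)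

theorem psiC_isCompl [Fintype L] (h : RelComplemented L) (θ : LatticeCon' L) :
    IsCompl θ (psiC h θ) :=
  ⟨psiC_disjoint h θ, psiC_codisjoint h θ⟩

end Compl

end LatticeCon'

/-- An auxiliary small type with no preexisting order instances. -/
structure ConAux (n : ℕ) : Type where
  val : Fin n

/-- The congruence lattice of a finite relatively complemented lattice is Boolean. -/
theorem con_boolean_of_finite_relComplemented (L : Type*) [Lattice L] [Fintype L]
    (h : RelComplemented L) :
    ∃ (B : Type) (_ : BooleanAlgebra B), Nonempty (LatticeCon' L ≃o B) := by
  classical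
  letI : ComplementedLattice (LatticeCon' L) :=
    ⟨fun θ => ⟨LatticeCon'.psiC h θ, LatticeCon'.psiC_isCompl h θ⟩⟩
  letI BA : BooleanAlgebra (LatticeCon' L) :=
    DistribLattice.booleanAlgebraOfComplemented (LatticeCon' L)
  have hfin : Finite (LatticeCon' L) := by
    refine Finite.of_injective (fun θ => θ.r) ?_
    intro θ φ hh
    cases θ; cases φ
    simpa using hh
  letI : Fintype (LatticeCon' L) := Fintype.ofFinite _
  let n := Fintype.card (LatticeCon' L)
  let e0 : LatticeCon' L ≃ Fin n := Fintype.equivFin _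
  let e : LatticeCon' L ≃ ConAux n :=
    e0.trans ⟨ConAux.mk, ConAux.val, fun _ => rfl, fun _ => rfl⟩
  let f : ConAux n → LatticeCon' L := e.symm
  letI : LE (ConAux n) := ⟨fun x y => f x ≤ f y⟩
  letI : LT (ConAux n) := ⟨fun x y => f x < f y⟩
  letI : Max (ConAux n) := ⟨fun x y => e (f x ⊔ f y)⟩
  letI : Min (ConAux n) := ⟨fun x y => e (f x ⊓ f y)⟩
  letI : Top (ConAux n) := ⟨e ⊤⟩
  letI : Bot (ConAux n) := ⟨e ⊥⟩
  letI : Compl (ConAux n) := ⟨fun x => e (f x)ᶜ⟩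
  letI : SDiff (ConAux n) := ⟨fun x y => e (f x \ f y)⟩
  letI : HImp (ConAux n) := ⟨fun x y => e (f x ⇨ f y)⟩
  letI BB : BooleanAlgebra (ConAux n) :=
    Function.Injective.booleanAlgebra f e.symm.injective Iff.rfl Iff.rfl
      (fun a b => e.symm_apply_apply _) (fun a b => e.symm_apply_apply _)
      (e.symm_apply_apply _) (e.symm_apply_apply _)
      (fun a => e.symm_apply_apply _) (fun a b => e.symm_apply_apply _)
      (fun a b => e.symm_apply_apply _)
  refine ⟨ConAux n, BB, ⟨?_⟩⟩
  exact
    { toEquiv := e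
      map_rel_iff' := @fun θ φ => by
        show f (e θ) ≤ f (e φ) ↔ θ ≤ φ
        rw [show f (e θ) = θ from e.symm_apply_apply θ,
          show f (e φ) = φ from e.symm_apply_apply φ] }
end

section
/- Let D be a finite distributive lattice and B its generated Boolean lattice with canonical embedding η : D → B and retraction ρ : B → D sending x to the least element of D above x. Then the restriction of ρ to the set J(B) of join-irreducible elements of B is an isotone bijection from J(B) onto the set J(D) of join-irreducible elements of D. -/
/-- Let `D` be a finite distributive lattice, `B` the Boolean lattice generated by `D`
(via a bound-preserving lattice embedding `η` whose image generates `B`), and let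
`ρ : B → D` send `x` to the least element of `D` above `x`. Then the restriction of
`ρ` to the join-irreducible elements of `B` is an isotone bijection onto the
join-irreducible elements of `D`. -/
theorem boolean_generated_retraction_bijOn_supIrred
    (D : Type*) [DistribLattice D] [BoundedOrder D] [Fintype D]
    (B : Type*) [BooleanAlgebra B] [Fintype B]
    (η : LatticeHom D B) (hinj : Function.Injective η)
    (h0 : η ⊥ = ⊥) (h1 : η ⊤ = ⊤)
    (hgen : ∀ s : Set B, Set.range η ⊆ s →
      (∀ x ∈ s, xᶜ ∈ s) → (∀ x ∈ s, ∀ y ∈ s, x ⊔ y ∈ s) → (∀ x ∈ s, ∀ y ∈ s, x ⊓ y ∈ s) →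
      ∀ b : B, b ∈ s)
    (ρ : B → D) (hρ : ∀ x : B, x ≤ η (ρ x) ∧ ∀ d : D, x ≤ η d → ρ x ≤ d) :
    Set.BijOn ρ {p : B | SupIrred p} {q : D | SupIrred q} ∧
      MonotoneOn ρ {p : B | SupIrred p} := by
  classical
  -- Galois connection: ρ x ≤ d ↔ x ≤ η d
  have hgc : ∀ (x : B) (d : D), ρ x ≤ d ↔ x ≤ η d := fun x d =>
    ⟨fun h => le_trans (hρ x).1 (OrderHomClass.mono η h), fun h => (hρ x).2 d h⟩
  -- η reflects order
  have hrefl : ∀ a b : D, η a ≤ η b → a ≤ b := by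
    intro a b h
    have : η (a ⊓ b) = η a := by rw [map_inf]; exact inf_eq_left.2 h
    have := hinj this
    exact le_of_inf_eq this
  have hmono : Monotone ρ := fun x y hxy => (hgc x (ρ y)).2 (hxy.trans (hρ y).1)
  have hρη : ∀ d : D, ρ (η d) = d := fun d =>
    le_antisymm ((hgc _ _).2 le_rfl) (hrefl _ _ (le_trans (le_refl _) (hρ (η d)).1))
  have hρbot : ρ (⊥ : B) = ⊥ := by
    have := (hgc ⊥ ⊥).2 (by rw [h0])
    exact le_bot_iff.1 this
  have hρsup : ∀ x y : B, ρ (x ⊔ y) = ρ x ⊔ ρ y := by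
    intro x y
    refine le_antisymm ((hgc _ _).2 ?_) (sup_le (hmono le_sup_left) (hmono le_sup_right))
    rw [map_sup]
    exact sup_le_sup (hρ x).1 (hρ y).1
  -- ρ maps SupIrred to SupIrred
  have hmaps : ∀ p : B, SupIrred p → SupIrred (ρ p) := by
    intro p hp
    rw [← supPrime_iff_supIrred] at hp ⊢
    constructor
    · intro hmin
      have : ρ p ≤ ⊥ := hmin.eq_bot ▸ le_rfl
      have : p ≤ η ⊥ := (hgc p ⊥).1 (le_bot_iff.1 this ▸ le_rfl)
      rw [h0, le_bot_iff] at this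
      exact hp.ne_bot this
    · intro b c hbc
      have : p ≤ η b ⊔ η c := le_trans ((hgc p _).1 hbc) (by rw [map_sup])
      rcases hp.le_sup.1 this with h | h
      · exact Or.inl ((hgc p b).2 h)
      · exact Or.inr ((hgc p c).2 h)
  -- injectivity on SupIrred
  have hinjOn : Set.InjOn ρ {p : B | SupIrred p} := by
    intro p hp p' hp' hpp'
    have hp'' : SupPrime p := supPrime_iff_supIrred.2 hp
    have hp''' : SupPrime p' := supPrime_iff_supIrred.2 hp'
    -- key: for SupPrime p, p ≤ bᶜ ↔ ¬ p ≤ b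
    have key : ∀ (r : B), SupPrime r → ∀ b : B, r ≤ bᶜ ↔ ¬ r ≤ b := by
      intro r hr b
      constructor
      · intro h1' h2
        have : r ≤ b ⊓ bᶜ := le_inf h2 h1'
        rw [inf_compl_eq_bot, le_bot_iff] at this
        exact hr.ne_bot this
      · intro h
        have : r ≤ b ⊔ bᶜ := by rw [sup_compl_eq_top]; exact le_top
        rcases hr.le_sup.1 this with h' | h'
        · exact absurd h' h
        · exact h'
    have main : ∀ b : B, (p ≤ b ↔ p' ≤ b) := by
      intro b
      refine hgen {b | p ≤ b ↔ p' ≤ b} ?_ ?_ ?_ ?_ b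
      · rintro _ ⟨d, rfl⟩
        simp only [Set.mem_setOf_eq]
        rw [← hgc, ← hgc, hpp']
      · intro x hx
        simp only [Set.mem_setOf_eq] at hx ⊢
        rw [key p hp'' x, key p' hp''' x, hx]
      · intro x hx y hy
        simp only [Set.mem_setOf_eq] at hx hy ⊢
        rw [hp''.le_sup, hp'''.le_sup, hx, hy]
      · intro x hx y hy
        simp only [Set.mem_setOf_eq] at hx hy ⊢
        rw [le_inf_iff, le_inf_iff, hx, hy]
    exact le_antisymm ((main p').2 le_rfl) ((main p).1 le_rfl)
  -- surjectivity
  have hsurj : Set.SurjOn ρ {p : B | SupIrred p} {q : D | SupIrred q} := by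
    intro q hq
    obtain ⟨s, hs, hirr⟩ := exists_supIrred_decomposition (η q)
    have hρs : ∀ t : Finset B, ρ (t.sup id) = t.sup ρ := by
      intro t
      induction t using Finset.induction with
      | empty => simpa using hρbot
      | insert _ _ hx ih => rw [Finset.sup_insert, Finset.sup_insert, hρsup, ih]; rfl
    have hq' : SupPrime q := supPrime_iff_supIrred.2 hq
    have : q ≤ s.sup ρ := by rw [← hρs s, hs, hρη]
    obtain ⟨p, hps, hqp⟩ := hq'.le_finset_sup.1 this
    refine ⟨p, hirr hps, le_antisymm ?_ hqp⟩
    have : p ≤ η q := hs ▸ Finset.le_sup (f := id) hps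
    exact (hgc p q).2 this
  exact ⟨⟨fun p hp => hmaps p hp, hinjOn, hsurj⟩, fun p _ p' _ h => hmono h⟩
end

section
/- Let L = ∏_{p ∈ P} L_p be a finite product of simple lattices each with a greatest element 1_{L_p} and a dual atom d'_p. For q ∈ P define d_q ∈ L by (d_q)_p = d'_q if p = q and (d_q)_p = 1_{L_p} otherwise. Then each d_q is a dual atom of L, and the filter (dual ideal) of L generated by {d_p : p ∈ P} is a Boolean lattice whose set of dual atoms is exactly {d_p : p ∈ P}. -/
/-- A congruence of a lattice. -/
structure LatticeCongruence (α : Type*) [Lattice α] where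
  r : α → α → Prop
  refl : ∀ a, r a a
  symm : ∀ {a b}, r a b → r b a
  trans : ∀ {a b c}, r a b → r b c → r a c
  sup : ∀ {a b c d}, r a b → r c d → r (a ⊔ c) (b ⊔ d)
  inf : ∀ {a b c d}, r a b → r c d → r (a ⊓ c) (b ⊓ d)

/-- A lattice is simple if it has at least two elements and its only congruences are
equality and the total relation. -/
def LatticeSimple (α : Type*) [Lattice α] : Prop :=
  (∃ a b : α, a ≠ b) ∧
    ∀ c : LatticeCongruence α, c.r = (fun a b => a = b) ∨ c.r = (fun _ _ => True)

/-- In a finite product `L = ∏_{p ∈ P} L_p` of simple lattices with top elements and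
dual atoms `d'_p`, the elements `d_q` (equal to `d'_q` in coordinate `q` and to `⊤`
elsewhere) are dual atoms of `L`, and the filter they generate is a Boolean lattice
whose dual atoms are exactly the `d_q`. -/
theorem product_dual_atoms_boolean_filter
    (P : Type*) [Fintype P] [DecidableEq P] (L : P → Type*) [∀ p, Lattice (L p)]
    [∀ p, OrderTop (L p)]
    (hs : ∀ p, LatticeSimple (L p))
    (d' : ∀ p, L p) (hd' : ∀ p, IsCoatom (d' p))
    (d : P → ∀ p, L p) (hd : ∀ q, d q = Function.update (⊤ : ∀ p, L p) q (d' q))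
    (F : Set (∀ p, L p)) (hF : F = {x | ∃ S : Finset P, S.inf d ≤ x}) :
    (∀ q, IsCoatom (d q)) ∧
      (∃ (B : Type) (_ : BooleanAlgebra B), Nonempty (F ≃o B)) ∧
      (∀ y ∈ F, ((y ≠ ⊤ ∧ ∀ z ∈ F, y < z → z = ⊤) ↔ ∃ q, y = d q)) := by
  classical
  have hdq1 : ∀ q, d q q = d' q := by
    intro q; rw [hd]; simp
  have hdq2 : ∀ q p, p ≠ q → d q p = ⊤ := by
    intro q p hpq; rw [hd, Function.update_of_ne hpq]; rfl
  have hle : ∀ p q, d' p ≤ d q p := by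
    intro p q
    by_cases h : p = q
    · subst h; rw [hdq1]
    · rw [hdq2 q p h]; exact le_top
  have hmem : ∀ x, x ∈ F ↔ ∀ p, d' p ≤ x p := by
    intro x; rw [hF]; constructor
    · rintro ⟨S, hS⟩ p
      calc d' p ≤ (S.inf d) p := by
            rw [Finset.inf_apply]; exact Finset.le_inf fun q _ => hle p q
        _ ≤ x p := hS p
    · intro h
      refine ⟨Finset.univ, fun p => ?_⟩
      rw [Finset.inf_apply]
      refine le_trans (Finset.inf_le (Finset.mem_univ p)) ?_
      rw [hdq1]; exact h p
  have hdich : ∀ p (a : L p), d' p ≤ a → a = ⊤ ∨ a = d' p := by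
    intro p a hpa
    rcases eq_or_lt_of_le hpa with h | h
    · exact Or.inr h.symm
    · exact Or.inl ((hd' p).2 _ h)
  have hdF : ∀ q, d q ∈ F := fun q => (hmem _).2 fun p => hle p q
  have hdne : ∀ q, d q ≠ ⊤ := by
    intro q h
    have h2 := congrFun h q
    rw [hdq1] at h2
    exact (hd' q).1 h2
  have hcoatom : ∀ q, IsCoatom (d q) := by
    intro q
    refine ⟨hdne q, fun x hx => ?_⟩
    have hq : d' q ≤ x q := le_trans (hdq1 q).ge (hx.le q)
    have htp : ∀ p, p ≠ q → x p = ⊤ := by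
      intro p hpq
      have h4 := hx.le p; rw [hdq2 q p hpq] at h4
      exact le_antisymm le_top h4
    rcases hdich q (x q) hq with h | h
    · funext p
      by_cases hpq : p = q
      · subst hpq; simpa using h
      · simpa using htp p hpq
    · exfalso; apply hx.ne
      funext p
      by_cases hpq : p = q
      · subst hpq; rw [hdq1, h]
      · rw [hdq2 q p hpq, htp p hpq]
  have part3 : ∀ y ∈ F, ((y ≠ ⊤ ∧ ∀ z ∈ F, y < z → z = ⊤) ↔ ∃ q, y = d q) := by
    intro y hy
    constructor
    · rintro ⟨hne, hmax⟩
      have h1 : ∀ p, y p = ⊤ ∨ y p = d' p := fun p => hdich p _ ((hmem y).1 hy p)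
      have h2 : ∃ q, y q = d' q := by
        by_contra h; push_neg at h
        apply hne; funext p
        rcases h1 p with h' | h'
        · simpa using h'
        · exact absurd h' (h p)
      obtain ⟨q, hq⟩ := h2
      refine ⟨q, funext fun p => ?_⟩
      by_cases hpq : p = q
      · subst hpq; rw [hdq1]; exact hq
      · rw [hdq2 q p hpq]
        by_contra hne'
        rcases h1 p with h' | h'
        · exact hne' h'
        · set z := Function.update y p ⊤ with hz
          have hzF : z ∈ F := (hmem z).2 fun r => by
            by_cases hr : r = p
            · subst hr; rw [hz, Function.update_self]; exact le_top
            · rw [hz, Function.update_of_ne hr]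
              exact (hmem y).1 hy r
          have hyz : y < z := by
            refine lt_of_le_of_ne (fun r => ?_) (fun he => ?_)
            · by_cases hr : r = p
              · subst hr; rw [hz, Function.update_self]; exact le_top
              · rw [hz, Function.update_of_ne hr]
            · have h6 := congrFun he p
              rw [hz, Function.update_self, h'] at h6
              exact (hd' p).1 h6
          have htop := hmax z hzF hyz
          have h5 := congrFun htop q
          rw [hz, Function.update_of_ne (fun h => hpq h.symm), hq, Pi.top_apply] at h5
          exact (hd' q).1 h5
    · rintro ⟨q, rfl⟩
      exact ⟨hdne q, fun z _ hlt => (hcoatom q).2 z hlt⟩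
  refine ⟨hcoatom, ?_, part3⟩
  refine ⟨Set (Fin (Fintype.card P)), inferInstance, ⟨?_⟩⟩
  have e := Fintype.equivFin P
  have iso2 : Set P ≃o Set (Fin (Fintype.card P)) :=
    { toFun := fun s => e '' s
      invFun := fun t => e ⁻¹' t
      left_inv := fun s => e.injective.preimage_image s
      right_inv := fun t => e.surjective.image_preimage t
      map_rel_iff' := fun {s t} => Set.image_subset_image_iff e.injective }
  have iso1 : F ≃o Set P :=
    { toFun := fun x => {p | x.1 p = ⊤}
      invFun := fun s => ⟨fun p => if p ∈ s then ⊤ else d' p,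
        (hmem _).2 fun p => by split
                               · exact le_top
                               · exact le_rfl⟩
      left_inv := by
        intro x
        apply Subtype.ext; funext p
        show (if p ∈ {p' | x.1 p' = ⊤} then ⊤ else d' p) = x.1 p
        simp only [Set.mem_setOf_eq]
        rcases hdich p _ ((hmem _).1 x.2 p) with h | h
        · rw [if_pos h, h]
        · rw [if_neg (show ¬ x.1 p = ⊤ by rw [h]; exact (hd' p).1), h]
      right_inv := by
        intro s
        ext p
        show (if p ∈ s then ⊤ else d' p) = ⊤ ↔ p ∈ s
        constructor
        · intro h
          by_contra hp
          rw [if_neg hp] at h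
          exact (hd' _).1 h
        · intro h; rw [if_pos h]
      map_rel_iff' := by
        intro x y
        show {p | x.1 p = ⊤} ⊆ {p | y.1 p = ⊤} ↔ x ≤ y
        constructor
        · intro h
          show x.1 ≤ y.1
          intro p
          rcases hdich p _ ((hmem _).1 x.2 p) with h' | h'
          · have h6 : y.1 p = ⊤ := h (show x.1 p = ⊤ from h')
            rw [h', h6]
          · rw [h']; exact (hmem _).1 y.2 p
        · intro h p hp
          have hp' : x.1 p = ⊤ := hp
          show y.1 p = ⊤
          have h' : x.1 ≤ y.1 := h
          exact top_le_iff.mp (hp' ▸ h' p) }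
  exact iso1.trans iso2
end

section
/- Define L inductively: L_0 = ω (the chain of natural numbers); at a countable limit ordinal λ, L_λ = ⋃_{ξ<λ} L_ξ; given a countable 2-ladder L_ξ with no largest element and a strictly increasing cofinal sequence (a_n), let L_{ξ+1} = L_ξ ∪ {b_n : n < ω} with the least partial order extending the order of L_ξ, the chain order b_0 < b_1 < ⋯, and the relations a_n < b_n. Then each L_{ξ+1} is again a countable 2-ladder with no largest element, and L = ⋃_{ξ<ω₁} L_ξ is a 2-ladder of cardinality ℵ₁. -/
/-- The least partial order on `P ⊕ ℕ` extending the order of `P`, the natural order of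
the new chain `b_0 < b_1 < ⋯` (the right summand), and the relations `a_n < b_n`,
where `a : ℕ → P` is a strictly increasing cofinal sequence. -/
def extLe (P : Type*) [Lattice P] (a : ℕ → P) : P ⊕ ℕ → P ⊕ ℕ → Prop
  | Sum.inl x, Sum.inl y => x ≤ y
  | Sum.inr m, Sum.inr n => m ≤ n
  | Sum.inl x, Sum.inr n => ∃ m ≤ n, x ≤ a m
  | Sum.inr _, Sum.inl _ => False

namespace TLAux

variable {α β : Type*}

/-- relational least upper bound -/
def RLUB (r : α → α → Prop) (x y s : α) : Prop :=
  r x s ∧ r y s ∧ ∀ t, r x t → r y t → r s t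

/-- relational greatest lower bound -/
def RGLB (r : α → α → Prop) (x y s : α) : Prop :=
  r s x ∧ r s y ∧ ∀ t, r t x → r t y → r t s

/-- relational covering -/
def RCov (r : α → α → Prop) (x y : α) : Prop :=
  r x y ∧ x ≠ y ∧ ∀ t, r x t → t ≠ x → r t y → t = y

/-- Build a lattice from a relation with relational lubs and glbs. -/
noncomputable def latticeOfRel (r : α → α → Prop)
    (hrefl : ∀ x, r x x) (htrans : ∀ {x y z}, r x y → r y z → r x z)
    (hanti : ∀ {x y}, r x y → r y x → x = y)
    (hlub : ∀ x y, ∃ s, RLUB r x y s) (hglb : ∀ x y, ∃ s, RGLB r x y s) : Lattice α where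
  le := r
  le_refl := hrefl
  le_trans _ _ _ := htrans
  le_antisymm _ _ := hanti
  sup x y := (hlub x y).choose
  le_sup_left x y := ((hlub x y).choose_spec).1
  le_sup_right x y := ((hlub x y).choose_spec).2.1
  sup_le _ _ z h1 h2 := ((hlub _ _).choose_spec).2.2 z h1 h2
  inf x y := (hglb x y).choose
  inf_le_left x y := ((hglb x y).choose_spec).1
  inf_le_right x y := ((hglb x y).choose_spec).2.1
  le_inf x _ _ h1 h2 := ((hglb _ _).choose_spec).2.2 x h1 h2

theorem covBy_iff_rcov [PartialOrder α] (x y : α) :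
    x ⋖ y ↔ RCov (· ≤ ·) x y := by
  constructor
  · rintro ⟨hlt, hbet⟩
    refine ⟨hlt.le, hlt.ne, fun t hxt htx hty => ?_⟩
    by_contra hne
    exact hbet (lt_of_le_of_ne hxt (Ne.symm htx)) (lt_of_le_of_ne hty hne)
  · rintro ⟨hle, hne, h⟩
    refine ⟨lt_of_le_of_ne hle hne, fun t h1 h2 => ?_⟩
    exact absurd (h t h1.le h1.ne' h2.le) h2.ne

theorem covBy_iff_rcov' [PartialOrder α] {r : α → α → Prop}
    (hle : ∀ x y : α, x ≤ y ↔ r x y) (x y : α) : x ⋖ y ↔ RCov r x y := by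
  rw [covBy_iff_rcov]
  unfold RCov
  simp only [hle]

theorem isLadder_latticeOfRel {α : Type*} (r : α → α → Prop)
    (hrefl : ∀ x, r x x) (htrans : ∀ {x y z}, r x y → r y z → r x z)
    (hanti : ∀ {x y}, r x y → r y x → x = y)
    (hlub : ∀ x y, ∃ s, RLUB r x y s) (hglb : ∀ x y, ∃ s, RGLB r x y s)
    (hfin : ∀ u, {v | r v u}.Finite) (hcov : ∀ u, {v | RCov r v u}.ncard ≤ 2) :
    @IsLadder 2 α (latticeOfRel r hrefl htrans hanti hlub hglb) := by
  letI inst : Lattice α := latticeOfRel r hrefl htrans hanti hlub hglb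
  show @IsLadder 2 α inst
  intro u
  refine ⟨hfin u, ?_⟩
  have he : {b | b ⋖ u} = {b | RCov r b u} :=
    Set.ext fun b => covBy_iff_rcov' (fun _ _ => Iff.rfl) b u
  rw [he]
  exact hcov u

theorem rlub_unique {r : α → α → Prop} (hanti : ∀ {x y}, r x y → r y x → x = y)
    {x y s s' : α} (h : RLUB r x y s) (h' : RLUB r x y s') : s = s' :=
  hanti (h.2.2 s' h'.1 h'.2.1) (h'.2.2 s h.1 h.2.1)

section Transfer

variable (g : α → β) (hg : Function.Injective g) (r : β → β → Prop) (r' : α → α → Prop)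
    (hiff : ∀ u v, r (g u) (g v) ↔ r' u v)
    (hsupp : ∀ p q, r p q → p ∈ Set.range g ∧ q ∈ Set.range g)

include hiff hsupp

theorem Iic_transfer (u : α) : {q | r q (g u)} = g '' {v | r' v u} := by
  ext q
  constructor
  · intro hq
    obtain ⟨v, rfl⟩ := (hsupp _ _ hq).1
    exact ⟨v, (hiff _ _).1 hq, rfl⟩
  · rintro ⟨v, hv, rfl⟩
    exact (hiff _ _).2 hv

include hg in
theorem RCov_transfer (u : α) :
    {q | RCov r q (g u)} = g '' {v | RCov r' v u} := by
  ext q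
  constructor
  · rintro ⟨h1, h2, h3⟩
    obtain ⟨v, rfl⟩ := (hsupp _ _ h1).1
    refine ⟨v, ⟨(hiff _ _).1 h1, fun he => h2 (by rw [he]), fun t' ht1 ht2 ht3 => ?_⟩, rfl⟩
    exact hg (h3 (g t') ((hiff _ _).2 ht1) (fun he => ht2 (hg he)) ((hiff _ _).2 ht3))
  · rintro ⟨v, ⟨h1, h2, h3⟩, rfl⟩
    refine ⟨(hiff _ _).2 h1, fun he => h2 (hg he), fun t ht1 ht2 ht3 => ?_⟩
    obtain ⟨t', rfl⟩ := (hsupp _ _ ht1).2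
    rw [h3 t' ((hiff _ _).1 ht1) (fun he => ht2 (by rw [he])) ((hiff _ _).1 ht3)]

theorem RLUB_transfer {u v s : α} (h : RLUB r' u v s) : RLUB r (g u) (g v) (g s) := by
  refine ⟨(hiff _ _).2 h.1, (hiff _ _).2 h.2.1, fun t ht1 ht2 => ?_⟩
  obtain ⟨t', rfl⟩ := (hsupp _ _ ht1).2
  exact (hiff _ _).2 (h.2.2 t' ((hiff _ _).1 ht1) ((hiff _ _).1 ht2))

theorem RGLB_transfer {u v s : α} (h : RGLB r' u v s) : RGLB r (g u) (g v) (g s) := by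
  refine ⟨(hiff _ _).2 h.1, (hiff _ _).2 h.2.1, fun t ht1 ht2 => ?_⟩
  obtain ⟨t', rfl⟩ := (hsupp _ _ ht1).1
  exact (hiff _ _).2 (h.2.2 t' ((hiff _ _).1 ht1) ((hiff _ _).1 ht2))

end Transfer

end TLAux

section Ext

open TLAux

variable {P : Type*} [Lattice P] {a : ℕ → P}

theorem extLe_refl (u : P ⊕ ℕ) : extLe P a u u := by
  cases u <;> simp [extLe]

theorem extLe_trans : ∀ {u v w : P ⊕ ℕ}, extLe P a u v → extLe P a v w → extLe P a u w := by
  rintro (x | m) (y | n) (z | k) h1 h2 <;> simp only [extLe] at *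
  · exact le_trans h1 h2
  · obtain ⟨j, hj, h⟩ := h2
    exact ⟨j, hj, le_trans h1 h⟩
  · obtain ⟨j, hj, h⟩ := h1
    exact ⟨j, le_trans hj h2, h⟩
  · exact le_trans h1 h2

theorem extLe_antisymm : ∀ {u v : P ⊕ ℕ}, extLe P a u v → extLe P a v u → u = v := by
  rintro (x | m) (y | n) h1 h2 <;> simp only [extLe] at *
  · rw [le_antisymm h1 h2]
  · rw [le_antisymm h1 h2]

theorem extLe_lub_inl_inl (hmono : Monotone a) (x y : P) :
    RLUB (extLe P a) (.inl x) (.inl y) (.inl (x ⊔ y)) := by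
  refine ⟨le_sup_left, le_sup_right, ?_⟩
  rintro (z | n) h1 h2
  · exact sup_le h1 h2
  · obtain ⟨j, hj, h⟩ := h1
    obtain ⟨k, hk, h'⟩ := h2
    exact ⟨max j k, max_le hj hk,
      sup_le (h.trans (hmono (le_max_left j k))) (h'.trans (hmono (le_max_right j k)))⟩

open Classical in
theorem extLe_lub_inl_inl' (hmono : Monotone a) {x y s : P}
    (h : RLUB (· ≤ ·) x y s) : RLUB (extLe P a) (.inl x) (.inl y) (.inl s) := by
  refine ⟨h.1, h.2.1, ?_⟩
  rintro (z | n) h1 h2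
  · exact h.2.2 z h1 h2
  · obtain ⟨j, hj, hx⟩ := h1
    obtain ⟨k, hk, hy⟩ := h2
    refine ⟨max j k, max_le hj hk, h.2.2 (a (max j k))
      (hx.trans (hmono (le_max_left j k))) (hy.trans (hmono (le_max_right j k)))⟩

open Classical in
theorem extLe_lub_inl_inr (hcof : ∀ x : P, ∃ n, x ≤ a n) (x : P) (n : ℕ) :
    RLUB (extLe P a) (.inl x) (.inr n) (.inr (max n (Nat.find (hcof x)))) := by
  refine ⟨⟨Nat.find (hcof x), le_max_right _ _, Nat.find_spec (hcof x)⟩, le_max_left _ _, ?_⟩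
  rintro (z | m) h1 h2
  · exact absurd h2 (by simp [extLe])
  · obtain ⟨j, hj, h⟩ := h1
    exact max_le h2 (le_trans (Nat.find_min' (hcof x) h) hj)

open Classical in
theorem extLe_lub (hmono : Monotone a) (hcof : ∀ x : P, ∃ n, x ≤ a n) (u v : P ⊕ ℕ) :
    ∃ s, RLUB (extLe P a) u v s := by
  rcases u with x | n <;> rcases v with y | m
  · exact ⟨_, extLe_lub_inl_inl hmono x y⟩
  · exact ⟨_, extLe_lub_inl_inr hcof x m⟩
  · obtain ⟨h1, h2, h3⟩ := extLe_lub_inl_inr hcof y n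
    exact ⟨_, h2, h1, fun t ht1 ht2 => h3 t ht2 ht1⟩
  · refine ⟨.inr (max n m), le_max_left _ _, le_max_right _ _, ?_⟩
    rintro (z | k) h1 h2
    · exact absurd h1 (by simp [extLe])
    · exact max_le h1 h2

theorem extLe_glb (hmono : Monotone a) (u v : P ⊕ ℕ) : ∃ s, RGLB (extLe P a) u v s := by
  rcases u with x | n <;> rcases v with y | m
  · refine ⟨.inl (x ⊓ y), inf_le_left, inf_le_right, ?_⟩
    rintro (z | k) h1 h2
    · exact le_inf h1 h2
    · exact absurd h1 (by simp [extLe])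
  · refine ⟨.inl (x ⊓ a m), inf_le_left, ⟨m, le_refl m, inf_le_right⟩, ?_⟩
    rintro (z | k) h1 h2
    · obtain ⟨j, hj, h⟩ := h2
      exact le_inf h1 (h.trans (hmono hj))
    · exact absurd h1 (by simp [extLe])
  · refine ⟨.inl (y ⊓ a n), ⟨n, le_refl n, inf_le_right⟩, inf_le_left, ?_⟩
    rintro (z | k) h1 h2
    · obtain ⟨j, hj, h⟩ := h1
      exact le_inf h2 (h.trans (hmono hj))
    · exact absurd h2 (by simp [extLe])
  · refine ⟨.inr (min n m), min_le_left _ _, min_le_right _ _, ?_⟩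
    rintro (z | k) h1 h2
    · obtain ⟨j, hj, h⟩ := h1
      obtain ⟨i, hi, h'⟩ := h2
      refine ⟨min j i, le_min (le_trans (min_le_left j i) hj)
        (le_trans (min_le_right j i) hi), ?_⟩
      rcases min_cases j i with ⟨he, _⟩ | ⟨he, _⟩ <;> rw [he]
      · exact h
      · exact h'
    · exact le_min h1 h2

theorem extLe_iic_finite (hP : IsLadder 2 P) (hmono : Monotone a) (u : P ⊕ ℕ) :
    {v | extLe P a v u}.Finite := by
  rcases u with x | n
  · have : {v | extLe P a v (.inl x)} ⊆ Sum.inl '' Set.Iic x := by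
      rintro (z | k) h
      · exact ⟨z, h, rfl⟩
      · exact absurd h (by simp [extLe])
    exact Set.Finite.subset ((hP x).1.image _) this
  · have : {v | extLe P a v (.inr n)} ⊆
        Sum.inl '' Set.Iic (a n) ∪ Sum.inr '' Set.Iic n := by
      rintro (z | k) h
      · obtain ⟨j, hj, h⟩ := h
        exact Or.inl ⟨z, h.trans (hmono hj), rfl⟩
      · exact Or.inr ⟨k, h, rfl⟩
    exact Set.Finite.subset (Set.Finite.union ((hP (a n)).1.image _)
      ((Set.finite_Iic n).image _)) this

theorem extLe_cov_card (hP : IsLadder 2 P) (hmono : Monotone a) (u : P ⊕ ℕ) :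
    {v | RCov (extLe P a) v u}.ncard ≤ 2 := by
  rcases u with x | n
  · have he : {v | RCov (extLe P a) v (.inl x)} = Sum.inl '' {y | y ⋖ x} := by
      ext v
      constructor
      · rintro ⟨h1, h2, h3⟩
        obtain ⟨y, rfl⟩ : ∃ y, v = Sum.inl y := by
          rcases v with y | k
          · exact ⟨y, rfl⟩
          · exact absurd h1 (by simp [extLe])
        refine ⟨y, (covBy_iff_rcov y x).2 ⟨h1, fun he => h2 (by rw [he]), ?_⟩, rfl⟩
        intro t ht1 ht2 ht3
        exact Sum.inl_injective
          (h3 (.inl t) ht1 (fun he => ht2 (Sum.inl_injective he)) ht3)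
      · rintro ⟨y, hy, rfl⟩
        obtain ⟨h1, h2, h3⟩ := (covBy_iff_rcov y x).1 hy
        refine ⟨h1, fun he => h2 (Sum.inl_injective he), ?_⟩
        rintro (t | k) ht1 ht2 ht3
        · rw [h3 t ht1 (fun he => ht2 (by rw [he])) ht3]
        · exact absurd ht3 (by simp [extLe])
    rw [he, Set.ncard_image_of_injective _ Sum.inl_injective]
    exact (hP x).2
  · have hsub : {v | RCov (extLe P a) v (.inr n)} ⊆ {Sum.inl (a n), Sum.inr (n - 1)} := by
      rintro (z | k) ⟨h1, h2, h3⟩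
      · obtain ⟨j, hj, h⟩ := h1
        left
        by_contra hne
        have hzan : z ≠ a n := fun he => hne (by rw [he])
        have : (Sum.inl (a n) : P ⊕ ℕ) = Sum.inr n :=
          h3 (.inl (a n)) (h.trans (hmono hj)) (fun he => hzan (Sum.inl_injective he).symm)
            ⟨n, le_refl n, le_refl _⟩
        simp at this
      · right
        have hkn : k < n := lt_of_le_of_ne h1 (fun he => h2 (by rw [he]))
        by_contra hne
        have hk1 : k ≠ n - 1 := fun he => hne (by rw [he]; exact Set.mem_singleton _)
        have : (Sum.inr (n - 1) : P ⊕ ℕ) = Sum.inr n :=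
          h3 (.inr (n - 1)) (Nat.le_sub_one_of_lt hkn)
            (fun he => hk1 (Sum.inr_injective he).symm) (Nat.sub_le n 1)
        have := Sum.inr_injective this
        omega
    calc {v | RCov (extLe P a) v (.inr n)}.ncard
        ≤ ({Sum.inl (a n), Sum.inr (n - 1)} : Set (P ⊕ ℕ)).ncard :=
          Set.ncard_le_ncard hsub (Set.toFinite _)
      _ ≤ 2 := by
          apply le_trans (Set.ncard_insert_le _ _)
          simp

theorem extLe_nomax (hcof : ∀ x : P, ∃ n, x ≤ a n) (u : P ⊕ ℕ) :
    ∃ v, extLe P a u v ∧ ¬ extLe P a v u := by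
  rcases u with x | n
  · obtain ⟨k, hk⟩ := hcof x
    exact ⟨.inr k, ⟨k, le_refl k, hk⟩, by simp [extLe]⟩
  · exact ⟨.inr (n + 1), by simp [extLe], by simp [extLe]⟩

theorem extLe_cofinal (hcof : ∀ x : P, ∃ n, x ≤ a n) (u : P ⊕ ℕ) :
    ∃ n, extLe P a u (.inr n) := by
  rcases u with x | n
  · obtain ⟨k, hk⟩ := hcof x
    exact ⟨k, k, le_refl k, hk⟩
  · exact ⟨n, le_refl n⟩

end Ext

namespace TLAux

theorem exists_cofinal_seq (α : Type*) [Lattice α] [Countable α] [Nonempty α]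
    (hnomax : ∀ x : α, ∃ y, x < y) :
    ∃ b : ℕ → α, StrictMono b ∧ ∀ x, ∃ n, x ≤ b n := by
  obtain ⟨f, hf⟩ := exists_surjective_nat α
  choose g hg using hnomax
  let b : ℕ → α := fun n => Nat.rec (g (f 0)) (fun n bn => g (bn ⊔ f (n + 1))) n
  have hb : ∀ n, b (n + 1) = g (b n ⊔ f (n + 1)) := fun n => rfl
  have hmono : StrictMono b := by
    apply strictMono_nat_of_lt_succ
    intro n
    rw [hb]
    exact lt_of_le_of_lt le_sup_left (hg _)
  refine ⟨b, hmono, fun x => ?_⟩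
  obtain ⟨n, rfl⟩ := hf x
  rcases n with _ | m
  · exact ⟨0, (hg (f 0)).le⟩
  · exact ⟨m + 1, le_trans le_sup_right (hb m ▸ (hg _).le)⟩

variable {P : Type*} [Lattice P] [Countable P] {a : ℕ → P}

theorem partA (hP : IsLadder 2 P) (hmono : Monotone a) (hcof : ∀ x : P, ∃ n, x ≤ a n) :
    ∃ inst : Lattice (P ⊕ ℕ),
      (∀ u v : P ⊕ ℕ, inst.le u v ↔ extLe P a u v) ∧
      @IsLadder 2 (P ⊕ ℕ) inst ∧
      (∀ u : P ⊕ ℕ, ∃ v : P ⊕ ℕ, inst.lt u v) ∧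
      Countable (P ⊕ ℕ) := by
  letI inst : Lattice (P ⊕ ℕ) := latticeOfRel (extLe P a) extLe_refl extLe_trans
    extLe_antisymm (extLe_lub hmono hcof) (extLe_glb hmono)
  have hladder : @IsLadder 2 (P ⊕ ℕ) inst :=
    isLadder_latticeOfRel _ _ _ _ _ _ (extLe_iic_finite hP hmono)
      (extLe_cov_card hP hmono)
  have hnm : ∀ u : P ⊕ ℕ, ∃ v : P ⊕ ℕ, inst.lt u v := by
    intro u
    obtain ⟨v, h1, h2⟩ := extLe_nomax hcof u
    exact ⟨v, h1, h2⟩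
  exact ⟨inst, fun u v => Iff.rfl, hladder, hnm, inferInstance⟩

end TLAux

namespace TLAux

noncomputable section PartB

/-- The carrier well-order of size ℵ₁. -/
abbrev W : Type := (Cardinal.aleph 1).ord.ToType

instance : Nonempty W :=
  Cardinal.mk_ne_zero_iff.1 (by
    rw [Cardinal.mk_ord_toType]
    exact (Cardinal.aleph0_pos.trans Cardinal.aleph0_lt_aleph_one).ne')

/-- The carrier of the big 2-ladder. -/
abbrev P2 : Type := W × ℕ

/-- A good cofinal sequence for the part of the carrier below `w`. -/
def Good (w : W) (q : P2 → P2 → Prop) (A : ℕ → P2) : Prop :=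
  (∀ k, (A k).1 < w) ∧ (∀ k, q (A k) (A (k + 1)) ∧ A k ≠ A (k + 1)) ∧
    ∀ p : P2, p.1 < w → ∃ k, q p (A k)

/-- Body of the transfinite recursion defining the stage orders. -/
def stageBody (w : W) (F : ∀ v : W, v < w → P2 → P2 → Prop) : P2 → P2 → Prop :=
  fun p q' =>
    (p.1 < w ∧ q'.1 < w ∧ ∃ v, ∃ h : v < w, F v h p q') ∨
    (p.1 = w ∧ q'.1 = w ∧ p.2 ≤ q'.2) ∨
    (p.1 < w ∧ q'.1 = w ∧ ∃ k ≤ q'.2,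
      ∃ v, ∃ h : v < w,
        F v h p (Classical.epsilon (Good w (fun x y => ∃ v, ∃ h : v < w, F v h x y)) k))

/-- The order at stage `w`. -/
def stage : W → P2 → P2 → Prop :=
  WellFounded.fix wellFounded_lt stageBody

/-- Union of the orders at stages before `w`. -/
def stageQ (w : W) (p q : P2) : Prop := ∃ v, ∃ _ : v < w, stage v p q

/-- The chosen cofinal sequence below stage `w`. -/
def stageA (w : W) : ℕ → P2 := Classical.epsilon (Good w (stageQ w))

theorem stage_eq (w : W) : stage w = stageBody w (fun v _ => stage v) :=
  WellFounded.fix_eq _ _ _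

theorem stage_iff (w : W) (p q' : P2) : stage w p q' ↔
    (p.1 < w ∧ q'.1 < w ∧ stageQ w p q') ∨
    (p.1 = w ∧ q'.1 = w ∧ p.2 ≤ q'.2) ∨
    (p.1 < w ∧ q'.1 = w ∧ ∃ k ≤ q'.2, stageQ w p (stageA w k)) := by
  rw [stage_eq]
  exact Iff.rfl

theorem stage_row (w : W) (n m : ℕ) : stage w (w, n) (w, m) ↔ n ≤ m := by
  rw [stage_iff]
  simp [lt_irrefl]

theorem countable_Iio (w : W) : (Set.Iio w).Countable :=
  (Cardinal.countable_iff_lt_aleph_one _).2 (Cardinal.mk_Iio_ord_toType w)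

/-- The invariants carried through the transfinite induction. -/
structure Inv (w : W) : Prop where
  supp : ∀ p q : P2, stage w p q → p.1 ≤ q.1 ∧ q.1 ≤ w
  coh : ∀ v, v ≤ w → ∀ p q : P2, q.1 ≤ v → (stage w p q ↔ stage v p q)
  refl' : ∀ p : P2, p.1 ≤ w → stage w p p
  trans' : ∀ p q r : P2, stage w p q → stage w q r → stage w p r
  anti : ∀ p q : P2, stage w p q → stage w q p → p = q
  lub : ∀ p q : P2, p.1 ≤ w → q.1 ≤ w → ∃ s, RLUB (stage w) p q s
  glb : ∀ p q : P2, p.1 ≤ w → q.1 ≤ w → ∃ s, RGLB (stage w) p q s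
  lubpres : ∀ v, v ≤ w → ∀ p q s : P2, RLUB (stage v) p q s → RLUB (stage w) p q s
  cof : ∀ p : P2, p.1 ≤ w → ∃ m, stage w p (w, m)
  iicfin : ∀ p : P2, p.1 ≤ w → {q | stage w q p}.Finite
  covs : ∀ p : P2, p.1 ≤ w → {q | RCov (stage w) q p}.ncard ≤ 2

end PartB

end TLAux

namespace TLAux
section PartB2

theorem inv_min (w : W) (hm : ¬∃ v : W, v < w) : Inv w := by
  have hnolt : ∀ p : P2, ¬p.1 < w := fun p h => hm ⟨p.1, h⟩
  have heq : ∀ p : P2, p.1 ≤ w → p.1 = w := fun p h =>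
    h.lt_or_eq.resolve_left (hnolt p)
  have hiff : ∀ p q : P2, stage w p q ↔ p.1 = w ∧ q.1 = w ∧ p.2 ≤ q.2 := by
    intro p q
    rw [stage_iff]
    constructor
    · rintro (⟨h, -, -⟩ | h | ⟨h, -, -⟩)
      · exact absurd h (hnolt p)
      · exact h
      · exact absurd h (hnolt p)
    · exact fun h => Or.inr (Or.inl h)
  have hmk : ∀ p : P2, p.1 = w → (w, p.2) = p := by
    intro p h
    rw [← h]
  refine ⟨?_, ?_, ?_, ?_, ?_, ?_, ?_, ?_, ?_, ?_, ?_⟩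
  · intro p q h
    obtain ⟨h1, h2, -⟩ := (hiff p q).1 h
    rw [h1, h2]
    exact ⟨le_rfl, le_rfl⟩
  · intro v hv p q _
    rcases hv.lt_or_eq with h | h
    · exact absurd ⟨v, h⟩ hm
    · rw [h]
  · intro p hp
    exact (hiff p p).2 ⟨heq p hp, heq p hp, le_rfl⟩
  · intro p q r h1 h2
    obtain ⟨a1, a2, a3⟩ := (hiff p q).1 h1
    obtain ⟨b1, b2, b3⟩ := (hiff q r).1 h2
    exact (hiff p r).2 ⟨a1, b2, a3.trans b3⟩
  · intro p q h1 h2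
    obtain ⟨a1, a2, a3⟩ := (hiff p q).1 h1
    obtain ⟨b1, b2, b3⟩ := (hiff q p).1 h2
    have := le_antisymm a3 b3
    rw [← hmk p a1, ← hmk q a2, this]
  · intro p q hp hq
    refine ⟨(w, max p.2 q.2), (hiff _ _).2 ⟨heq p hp, rfl, le_max_left _ _⟩,
      (hiff _ _).2 ⟨heq q hq, rfl, le_max_right _ _⟩, ?_⟩
    intro t h1 h2
    obtain ⟨a1, a2, a3⟩ := (hiff p t).1 h1
    obtain ⟨b1, b2, b3⟩ := (hiff q t).1 h2
    exact (hiff _ _).2 ⟨rfl, a2, max_le a3 b3⟩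
  · intro p q hp hq
    refine ⟨(w, min p.2 q.2), (hiff _ _).2 ⟨rfl, heq p hp, min_le_left _ _⟩,
      (hiff _ _).2 ⟨rfl, heq q hq, min_le_right _ _⟩, ?_⟩
    intro t h1 h2
    obtain ⟨a1, a2, a3⟩ := (hiff t p).1 h1
    obtain ⟨b1, b2, b3⟩ := (hiff t q).1 h2
    exact (hiff _ _).2 ⟨a1, rfl, le_min a3 b3⟩
  · intro v hv p q s h
    rcases hv.lt_or_eq with h' | h'
    · exact absurd ⟨v, h'⟩ hm
    · rw [← h']
      exact h
  · intro p hp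
    exact ⟨p.2, (hiff _ _).2 ⟨heq p hp, rfl, le_rfl⟩⟩
  · intro p hp
    apply Set.Finite.subset ((Set.finite_Iic p.2).image (fun k => ((w, k) : P2)))
    intro q hq
    obtain ⟨a1, a2, a3⟩ := (hiff q p).1 hq
    exact ⟨q.2, a3, hmk q a1⟩
  · intro p hp
    have hsub : {q | RCov (stage w) q p} ⊆ {((w, p.2 - 1) : P2)} := by
      rintro q ⟨h1, h2, h3⟩
      obtain ⟨a1, a2, a3⟩ := (hiff q p).1 h1
      have hlt : q.2 < p.2 := by
        rcases a3.lt_or_eq with h | h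
        · exact h
        · exact absurd (by rw [← hmk q a1, ← hmk p a2, h]) h2
      have ht : stage w q (w, p.2 - 1) := (hiff _ _).2 ⟨a1, rfl, by omega⟩
      by_contra hne
      have : (w, p.2 - 1) ≠ q := fun he => hne (by rw [he]; exact Set.mem_singleton _)
      have := h3 _ ht this ((hiff _ _).2 ⟨rfl, a2, Nat.sub_le _ _⟩)
      rw [← hmk p a2] at this
      have := congrArg Prod.snd this
      simp at this
      omega
    calc {q | RCov (stage w) q p}.ncard ≤ ({((w, p.2 - 1) : P2)} : Set P2).ncard :=
          Set.ncard_le_ncard hsub (Set.toFinite _)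
      _ ≤ 2 := by simp

end PartB2
end TLAux

namespace TLAux
section PartB3

theorem inv_step (w : W) (hex : ∃ v : W, v < w) (IH : ∀ v : W, v < w → Inv v) :
    Inv w := by
  classical
  -- basic facts about the union order below w
  have qiff : ∀ p t : P2, stageQ w p t ↔ t.1 < w ∧ stage t.1 p t := by
    intro p t
    constructor
    · rintro ⟨v, hv, h⟩
      have hs := (IH v hv).supp p t h
      exact ⟨lt_of_le_of_lt hs.2 hv, ((IH v hv).coh t.1 hs.2 p t le_rfl).1 h⟩
    · rintro ⟨ht, h⟩
      exact ⟨t.1, ht, h⟩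
  have qsupp : ∀ p t : P2, stageQ w p t → p.1 ≤ t.1 ∧ t.1 < w := by
    intro p t h
    obtain ⟨ht, h'⟩ := (qiff p t).1 h
    exact ⟨((IH t.1 ht).supp p t h').1, ht⟩
  have qrefl : ∀ p : P2, p.1 < w → stageQ w p p :=
    fun p h => ⟨p.1, h, (IH p.1 h).refl' p le_rfl⟩
  have qtrans : ∀ p q r : P2, stageQ w p q → stageQ w q r → stageQ w p r := by
    intro p q r h1 h2
    obtain ⟨hq, h1'⟩ := (qiff p q).1 h1
    obtain ⟨hr, h2'⟩ := (qiff q r).1 h2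
    have hle : q.1 ≤ r.1 := ((IH r.1 hr).supp q r h2').1
    exact ⟨r.1, hr, (IH r.1 hr).trans' p q r (((IH r.1 hr).coh q.1 hle p q le_rfl).2 h1') h2'⟩
  have qanti : ∀ p q : P2, stageQ w p q → stageQ w q p → p = q := by
    intro p q h1 h2
    obtain ⟨hq, h1'⟩ := (qiff p q).1 h1
    obtain ⟨hp, h2'⟩ := (qiff q p).1 h2
    have e : p.1 ≤ q.1 := ((IH q.1 hq).supp p q h1').1
    exact (IH q.1 hq).anti p q h1' (((IH q.1 hq).coh p.1 e q p le_rfl).2 h2')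
  -- the subtype of elements below w
  set U : Type := {p : P2 // p.1 < w} with hU
  have hUcnt : Countable U := by
    haveI := (countable_Iio w).to_subtype
    have hinj : Function.Injective (fun u : U => ((⟨u.1.1, u.2⟩ : Set.Iio w), u.1.2)) := by
      rintro ⟨⟨x1, x2⟩, hx⟩ ⟨⟨y1, y2⟩, hy⟩ h
      simp only [Prod.mk.injEq, Subtype.mk.injEq] at h
      obtain ⟨h1, rfl⟩ := h
      have e : x1 = y1 := congrArg Subtype.val h1
      subst e
      rfl
    exact hinj.countable
  haveI := hUcnt
  have hUne : Nonempty U := by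
    obtain ⟨v, hv⟩ := hex
    exact ⟨⟨(v, 0), hv⟩⟩
  haveI := hUne
  set rU : U → U → Prop := fun p q => stageQ w p.1 q.1 with hrU
  have hUrefl : ∀ p : U, rU p p := fun p => qrefl p.1 p.2
  have hUtrans : ∀ {p q r : U}, rU p q → rU q r → rU p r :=
    fun {p q r} h1 h2 => qtrans p.1 q.1 r.1 h1 h2
  have hUanti : ∀ {p q : U}, rU p q → rU q p → p = q :=
    fun {p q} h1 h2 => Subtype.ext (qanti p.1 q.1 h1 h2)
  have hUlub : ∀ p q : U, ∃ s, RLUB rU p q s := by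
    intro p q
    have hv : max p.1.1 q.1.1 < w := max_lt p.2 q.2
    set v := max p.1.1 q.1.1
    obtain ⟨s, hs⟩ := (IH v hv).lub p.1 q.1 (le_max_left _ _) (le_max_right _ _)
    have hsv : s.1 ≤ v := ((IH v hv).supp p.1 s hs.1).2
    refine ⟨⟨s, lt_of_le_of_lt hsv hv⟩, ⟨v, hv, hs.1⟩, ⟨v, hv, hs.2.1⟩, ?_⟩
    intro t ht1 ht2
    have hu : max v t.1.1 < w := max_lt hv t.2
    set u := max v t.1.1
    have hLt := (IH u hu).lubpres v (le_max_left _ _) p.1 q.1 s hs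
    have h1 : stage u p.1 t.1 :=
      ((IH u hu).coh t.1.1 (le_max_right _ _) p.1 t.1 le_rfl).2 ((qiff p.1 t.1).1 ht1).2
    have h2 : stage u q.1 t.1 :=
      ((IH u hu).coh t.1.1 (le_max_right _ _) q.1 t.1 le_rfl).2 ((qiff q.1 t.1).1 ht2).2
    exact ⟨u, hu, hLt.2.2 t.1 h1 h2⟩
  have hUglb : ∀ p q : U, ∃ s, RGLB rU p q s := by
    intro p q
    have hv : max p.1.1 q.1.1 < w := max_lt p.2 q.2
    set v := max p.1.1 q.1.1
    obtain ⟨s, hs⟩ := (IH v hv).glb p.1 q.1 (le_max_left _ _) (le_max_right _ _)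
    have hsv : s.1 < w := lt_of_le_of_lt (((IH v hv).supp s p.1 hs.1).1.trans (le_max_left _ _)) hv
    refine ⟨⟨s, hsv⟩, ⟨v, hv, hs.1⟩, ⟨v, hv, hs.2.1⟩, ?_⟩
    intro t ht1 ht2
    have h1 : stage v t.1 p.1 :=
      ((IH v hv).coh p.1.1 (le_max_left _ _) t.1 p.1 le_rfl).2 ((qiff t.1 p.1).1 ht1).2
    have h2 : stage v t.1 q.1 :=
      ((IH v hv).coh q.1.1 (le_max_right _ _) t.1 q.1 le_rfl).2 ((qiff t.1 q.1).1 ht2).2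
    exact ⟨v, hv, hs.2.2 t.1 h1 h2⟩
  letI instU : Lattice U := latticeOfRel rU hUrefl hUtrans hUanti hUlub hUglb
  -- covers of elements below w transfer between stageQ and individual stages
  have qcov : ∀ p : P2, p.1 < w → {q | RCov (stageQ w) q p} = {q | RCov (stage p.1) q p} := by
    intro p hp
    ext q
    constructor
    · rintro ⟨h1, h2, h3⟩
      refine ⟨((qiff q p).1 h1).2, h2, fun t ht1 ht2 ht3 => ?_⟩
      exact h3 t ⟨p.1, hp, ht1⟩ ht2 ⟨p.1, hp, ht3⟩
    · rintro ⟨h1, h2, h3⟩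
      refine ⟨⟨p.1, hp, h1⟩, h2, fun t ht1 ht2 ht3 => ?_⟩
      have ht3' : stage p.1 t p := ((qiff t p).1 ht3).2
      have htle : t.1 ≤ p.1 := ((IH p.1 hp).supp t p ht3').1
      have ht1' : stage p.1 q t :=
        ((IH p.1 hp).coh t.1 htle q t le_rfl).2 ((qiff q t).1 ht1).2
      exact h3 t ht1' ht2 ht3'
  have hUval_supp : ∀ p q : P2, stageQ w p q →
      p ∈ Set.range (Subtype.val : U → P2) ∧ q ∈ Set.range (Subtype.val : U → P2) := by
    intro p q h
    obtain ⟨h1, h2⟩ := qsupp p q h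
    exact ⟨⟨⟨p, lt_of_le_of_lt h1 h2⟩, rfl⟩, ⟨⟨q, h2⟩, rfl⟩⟩
  have hUfin : ∀ u : U, {v : U | rU v u}.Finite := by
    intro u
    have he : {v : U | rU v u} = Subtype.val ⁻¹' {q | stage u.1.1 q u.1} := by
      ext v
      simp only [Set.mem_setOf_eq, Set.mem_preimage]
      constructor
      · intro h
        exact ((qiff v.1 u.1).1 h).2
      · intro h
        exact ⟨u.1.1, u.2, h⟩
    rw [he]
    exact Set.Finite.preimage (Set.injOn_of_injective Subtype.val_injective)
      ((IH u.1.1 u.2).iicfin u.1 le_rfl)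
  have hUcov : ∀ u : U, {v : U | RCov rU v u}.ncard ≤ 2 := by
    intro u
    have he : {q | RCov (stageQ w) q u.1} = Subtype.val '' {v : U | RCov rU v u} :=
      RCov_transfer Subtype.val Subtype.val_injective (stageQ w) rU
        (fun _ _ => Iff.rfl) hUval_supp u
    have := (IH u.1.1 u.2).covs u.1 le_rfl
    rw [← qcov u.1 u.2, he, Set.ncard_image_of_injective _ Subtype.val_injective] at this
    exact this
  have hLadU : @IsLadder 2 U instU :=
    isLadder_latticeOfRel rU hUrefl hUtrans hUanti hUlub hUglb hUfin hUcov
  -- a good sequence exists, so the chosen one is good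
  have hA : Good w (stageQ w) (stageA w) := by
    show Good w (stageQ w) (Classical.epsilon (Good w (stageQ w)))
    apply Classical.epsilon_spec (p := Good w (stageQ w))
    have hnm : ∀ x : U, ∃ y : U, rU x y ∧ ¬rU y x := by
      rintro ⟨⟨v, n⟩, hv⟩
      refine ⟨⟨(v, n + 1), hv⟩, ⟨v, hv, (stage_row v n (n + 1)).2 (Nat.le_succ n)⟩, ?_⟩
      intro hc
      have := ((qiff _ _).1 hc).2
      simp only at this
      exact absurd ((stage_row v (n + 1) n).1 this) (by omega)
    obtain ⟨b, hbmono, hbcof⟩ := @exists_cofinal_seq U instU hUcnt hUne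
      (fun x => let ⟨y, h1, h2⟩ := hnm x; ⟨y, h1, h2⟩)
    refine ⟨fun k => (b k).1, fun k => (b k).2, fun k => ?_, fun p hp => ?_⟩
    · have hlt := hbmono (Nat.lt_succ_self k)
      refine ⟨hlt.1, fun he => hlt.2 ?_⟩
      have he' : b k = b (k + 1) := Subtype.ext he
      rw [← he']
      exact hUrefl _
    · obtain ⟨k, hk⟩ := hbcof ⟨p, hp⟩
      exact ⟨k, hk⟩
  -- the cofinal sequence as elements of U
  set A' : ℕ → U := fun k => ⟨stageA w k, hA.1 k⟩ with hA'
  have hmonoA : ∀ i j : ℕ, i ≤ j → rU (A' i) (A' j) := by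
    intro i j h
    induction h with
    | refl => exact hUrefl _
    | step h ih => exact hUtrans ih (hA.2.1 _).1
  have hmonoA' : @Monotone ℕ U _ (@PartialOrder.toPreorder U
      (@SemilatticeSup.toPartialOrder U (@Lattice.toSemilatticeSup U instU))) A' :=
    fun i j h => hmonoA i j h
  have hcofA : ∀ x : U, ∃ n, rU x (A' n) := fun x => hA.2.2 x.1 x.2
  -- the transfer map
  set g : U ⊕ ℕ → P2 := Sum.elim Subtype.val (fun n => ((w, n) : P2)) with hg
  have ginj : Function.Injective g := by
    rintro (p | n) (q | m) h
    · exact congrArg Sum.inl (Subtype.ext h)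
    · exact absurd (congrArg Prod.fst h) (ne_of_lt p.2)
    · exact absurd (congrArg Prod.fst h).symm (ne_of_lt q.2)
    · exact congrArg Sum.inr (congrArg Prod.snd h)
  have suppw : ∀ p q : P2, stage w p q → p.1 ≤ q.1 ∧ q.1 ≤ w := by
    intro p q h
    rcases (stage_iff w p q).1 h with ⟨h1, h2, h3⟩ | ⟨h1, h2, -⟩ | ⟨h1, h2, -⟩
    · exact ⟨(qsupp p q h3).1, le_of_lt h2⟩
    · rw [h1, h2]
      exact ⟨le_rfl, le_rfl⟩
    · rw [h2]
      exact ⟨le_of_lt (h2 ▸ h1), le_rfl⟩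
  have grange : ∀ p : P2, p.1 ≤ w → p ∈ Set.range g := by
    intro p hp
    rcases hp.lt_or_eq with h | h
    · exact ⟨Sum.inl ⟨p, h⟩, rfl⟩
    · exact ⟨Sum.inr p.2, by simp only [hg, Sum.elim_inr]; rw [← h]⟩
  have gsupp : ∀ p q : P2, stage w p q → p ∈ Set.range g ∧ q ∈ Set.range g := by
    intro p q h
    obtain ⟨h1, h2⟩ := suppw p q h
    exact ⟨grange p (h1.trans h2), grange q h2⟩
  have giff : ∀ u v : U ⊕ ℕ, stage w (g u) (g v) ↔ extLe U A' u v := by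
    rintro (p | n) (q | m)
    · constructor
      · intro h
        rcases (stage_iff w _ _).1 h with ⟨-, -, h3⟩ | ⟨h1, -, -⟩ | ⟨-, h2, -⟩
        · exact h3
        · exact absurd h1 (ne_of_lt p.2)
        · exact absurd h2 (ne_of_lt q.2)
      · intro h
        exact (stage_iff w _ _).2 (Or.inl ⟨p.2, q.2, h⟩)
    · constructor
      · intro h
        rcases (stage_iff w _ _).1 h with ⟨-, h2, -⟩ | ⟨h1, -, -⟩ | ⟨-, -, h3⟩
        · exact absurd h2 (lt_irrefl w)
        · exact absurd h1 (ne_of_lt p.2)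
        · exact h3
      · intro h
        exact (stage_iff w _ _).2 (Or.inr (Or.inr ⟨p.2, rfl, h⟩))
    · constructor
      · intro h
        rcases (stage_iff w _ _).1 h with ⟨h1, -, -⟩ | ⟨-, h2, -⟩ | ⟨h1, -, -⟩
        · exact absurd h1 (lt_irrefl w)
        · exact absurd h2 (ne_of_lt q.2)
        · exact absurd h1 (lt_irrefl w)
      · intro h
        simp only [extLe] at h
    · constructor
      · intro h
        rcases (stage_iff w _ _).1 h with ⟨h1, -, -⟩ | ⟨-, -, h3⟩ | ⟨h1, -, -⟩
        · exact absurd h1 (lt_irrefl w)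
        · exact h3
        · exact absurd h1 (lt_irrefl w)
      · intro h
        exact (stage_iff w _ _).2 (Or.inr (Or.inl ⟨rfl, rfl, h⟩))
  -- now the invariants at stage w
  refine ⟨suppw, ?_, ?_, ?_, ?_, ?_, ?_, ?_, ?_, ?_, ?_⟩
  · -- coh
    intro v hvw p q hq
    rcases hvw.lt_or_eq with hlt | Heq
    · constructor
      · intro h
        rcases (stage_iff w p q).1 h with ⟨-, -, h3⟩ | ⟨-, h2, -⟩ | ⟨-, h2, -⟩
        · exact ((IH v hlt).coh q.1 hq p q le_rfl).2 ((qiff p q).1 h3).2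
        · exact absurd h2 (ne_of_lt (lt_of_le_of_lt hq hlt))
        · exact absurd h2 (ne_of_lt (lt_of_le_of_lt hq hlt))
      · intro h
        have h1 := ((IH v hlt).supp p q h).1
        have h2 := lt_of_le_of_lt (((IH v hlt).supp p q h).2) hlt
        exact (stage_iff w p q).2
          (Or.inl ⟨lt_of_le_of_lt (h1.trans hq) hlt, lt_of_le_of_lt hq hlt, v, hlt, h⟩)
    · rw [Heq]
  · -- refl
    intro p hp
    obtain ⟨u, rfl⟩ := grange p hp
    exact (giff u u).2 (extLe_refl u)
  · -- trans
    intro p q r h1 h2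
    obtain ⟨u1, rfl⟩ := (gsupp _ _ h1).1
    obtain ⟨u2, rfl⟩ := (gsupp _ _ h1).2
    obtain ⟨u3, rfl⟩ := (gsupp _ _ h2).2
    exact (giff u1 u3).2 (extLe_trans ((giff u1 u2).1 h1) ((giff u2 u3).1 h2))
  · -- antisymm
    intro p q h1 h2
    obtain ⟨u1, rfl⟩ := (gsupp _ _ h1).1
    obtain ⟨u2, rfl⟩ := (gsupp _ _ h1).2
    exact congrArg g (extLe_antisymm ((giff u1 u2).1 h1) ((giff u2 u1).1 h2))
  · -- lub
    intro p q hp hq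
    obtain ⟨u1, rfl⟩ := grange p hp
    obtain ⟨u2, rfl⟩ := grange q hq
    obtain ⟨s, hs⟩ := extLe_lub hmonoA' hcofA u1 u2
    exact ⟨g s, RLUB_transfer g (stage w) (extLe U A') giff gsupp hs⟩
  · -- glb
    intro p q hp hq
    obtain ⟨u1, rfl⟩ := grange p hp
    obtain ⟨u2, rfl⟩ := grange q hq
    obtain ⟨s, hs⟩ := extLe_glb hmonoA' u1 u2
    exact ⟨g s, RGLB_transfer g (stage w) (extLe U A') giff gsupp hs⟩
  · -- lubpres
    intro v hvw p q s hlubv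
    rcases hvw.lt_or_eq with hlt | Heq
    · have hps := ((IH v hlt).supp p s hlubv.1)
      have hqs := ((IH v hlt).supp q s hlubv.2.1)
      have hsw : s.1 < w := lt_of_le_of_lt hps.2 hlt
      set p' : U := ⟨p, lt_of_le_of_lt (hps.1.trans hps.2) hlt⟩
      set q' : U := ⟨q, lt_of_le_of_lt (hqs.1.trans hqs.2) hlt⟩
      set s' : U := ⟨s, hsw⟩
      have hUl : RLUB rU p' q' s' := by
        refine ⟨⟨v, hlt, hlubv.1⟩, ⟨v, hlt, hlubv.2.1⟩, ?_⟩
        intro t ht1 ht2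
        have hu : max v t.1.1 < w := max_lt hlt t.2
        set u := max v t.1.1
        have hLt := (IH u hu).lubpres v (le_max_left _ _) p q s hlubv
        have h1 : stage u p t.1 :=
          ((IH u hu).coh t.1.1 (le_max_right _ _) p t.1 le_rfl).2 ((qiff p t.1).1 ht1).2
        have h2 : stage u q t.1 :=
          ((IH u hu).coh t.1.1 (le_max_right _ _) q t.1 le_rfl).2 ((qiff q t.1).1 ht2).2
        exact ⟨u, hu, hLt.2.2 t.1 h1 h2⟩
      have hext : RLUB (extLe U A') (Sum.inl p') (Sum.inl q') (Sum.inl s') :=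
        extLe_lub_inl_inl' hmonoA' hUl
      have := RLUB_transfer g (stage w) (extLe U A') giff gsupp hext
      exact this
    · rw [← Heq]
      exact hlubv
  · -- cof
    intro p hp
    rcases hp.lt_or_eq with hlt | Heq
    · obtain ⟨k, hk⟩ := hA.2.2 p hlt
      exact ⟨k, (stage_iff w p (w, k)).2 (Or.inr (Or.inr ⟨hlt, rfl, k, le_rfl, hk⟩))⟩
    · refine ⟨p.2, ?_⟩
      have : ((w, p.2) : P2) = p := by rw [← Heq]
      rw [this]
      exact (stage_iff w p p).2 (Or.inr (Or.inl ⟨Heq, Heq, le_rfl⟩))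
  · -- iicfin
    intro p hp
    obtain ⟨u, rfl⟩ := grange p hp
    have he : {q | stage w q (g u)} = g '' {v | extLe U A' v u} :=
      Iic_transfer g (stage w) (extLe U A') giff gsupp u
    rw [he]
    exact (extLe_iic_finite hLadU hmonoA' u).image g
  · -- covs
    intro p hp
    obtain ⟨u, rfl⟩ := grange p hp
    have he : {q | RCov (stage w) q (g u)} = g '' {v | RCov (extLe U A') v u} :=
      RCov_transfer g ginj (stage w) (extLe U A') giff gsupp u
    rw [he, Set.ncard_image_of_injective _ ginj]
    exact extLe_cov_card hLadU hmonoA' u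

end PartB3
end TLAux

namespace TLAux
section PartB4

theorem inv (w : W) : Inv w := by
  refine WellFounded.induction wellFounded_lt w ?_
  intro w IH
  by_cases hex : ∃ v : W, v < w
  · exact inv_step w hex IH
  · exact inv_min w hex

/-- The global order on the big carrier. -/
def gle (p q : P2) : Prop := stage q.1 p q

theorem gle_iff {w : W} (p q : P2) (hq : q.1 ≤ w) : gle p q ↔ stage w p q :=
  ((inv w).coh q.1 hq p q le_rfl).symm

theorem grefl (p : P2) : gle p p := (inv p.1).refl' p le_rfl

theorem gtrans {p q r : P2} (h1 : gle p q) (h2 : gle q r) : gle p r := by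
  have hle : q.1 ≤ r.1 := ((inv r.1).supp q r h2).1
  exact (inv r.1).trans' p q r ((gle_iff p q hle).1 h1) h2

theorem ganti {p q : P2} (h1 : gle p q) (h2 : gle q p) : p = q := by
  have e1 : p.1 ≤ q.1 := ((inv q.1).supp p q h1).1
  exact (inv q.1).anti p q h1 ((gle_iff q p e1).1 h2)

theorem glub (p q : P2) : ∃ s, RLUB gle p q s := by
  set w := max p.1 q.1
  obtain ⟨s, hs⟩ := (inv w).lub p q (le_max_left _ _) (le_max_right _ _)
  have hsw : s.1 ≤ w := ((inv w).supp p s hs.1).2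
  refine ⟨s, (gle_iff p s hsw).2 hs.1, (gle_iff q s hsw).2 hs.2.1, ?_⟩
  · intro t ht1 ht2
    have hu : w ≤ max w t.1 := le_max_left _ _
    have hLt := (inv (max w t.1)).lubpres w hu p q s hs
    have h1 : stage (max w t.1) p t := (gle_iff p t (le_max_right _ _)).1 ht1
    have h2 : stage (max w t.1) q t := (gle_iff q t (le_max_right _ _)).1 ht2
    exact (gle_iff s t (le_max_right _ _)).2 (hLt.2.2 t h1 h2)

theorem gglb (p q : P2) : ∃ s, RGLB gle p q s := by
  set w := max p.1 q.1
  obtain ⟨s, hs⟩ := (inv w).glb p q (le_max_left _ _) (le_max_right _ _)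
  refine ⟨s, (gle_iff s p (le_max_left _ _)).2 hs.1, (gle_iff s q (le_max_right _ _)).2 hs.2.1, ?_⟩
  intro t ht1 ht2
  have h1 : stage w t p := (gle_iff t p (le_max_left _ _)).1 ht1
  have h2 : stage w t q := (gle_iff t q (le_max_right _ _)).1 ht2
  have hsw : s.1 ≤ w := (((inv w).supp s p hs.1).1).trans (le_max_left _ _)
  exact (gle_iff t s hsw).2 (hs.2.2 t h1 h2)

theorem gfin (p : P2) : {q | gle q p}.Finite := (inv p.1).iicfin p le_rfl

theorem gcov (p : P2) : {q | RCov gle q p}.ncard ≤ 2 := by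
  have he : {q | RCov gle q p} = {q | RCov (stage p.1) q p} := by
    ext q
    constructor
    · rintro ⟨h1, h2, h3⟩
      refine ⟨h1, h2, fun t ht1 ht2 ht3 => ?_⟩
      have htle : t.1 ≤ p.1 := ((inv p.1).supp t p ht3).1
      exact h3 t ((gle_iff q t htle).2 ht1) ht2 ((gle_iff t p le_rfl).2 ht3)
    · rintro ⟨h1, h2, h3⟩
      refine ⟨h1, h2, fun t ht1 ht2 ht3 => ?_⟩
      have htle : t.1 ≤ p.1 := ((inv p.1).supp t p ((gle_iff t p le_rfl).1 ht3)).1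
      exact h3 t ((gle_iff q t htle).1 ht1) ht2 ((gle_iff t p le_rfl).1 ht3)
  rw [he]
  exact (inv p.1).covs p le_rfl

/-- The big lattice. -/
noncomputable def bigLattice : Lattice P2 :=
  latticeOfRel gle grefl gtrans ganti glub gglb

theorem bigLadder : @IsLadder 2 P2 bigLattice :=
  isLadder_latticeOfRel gle grefl gtrans ganti glub gglb gfin gcov

theorem bigCard : Cardinal.mk P2 = Cardinal.aleph 1 := by
  have h1 : Cardinal.mk W = Cardinal.aleph 1 := Cardinal.mk_ord_toType _
  have h2 : Cardinal.mk P2 = Cardinal.mk W * Cardinal.mk ℕ := by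
    rw [Cardinal.mk_prod]
    simp
  rw [h2, h1, Cardinal.mk_nat]
  exact Cardinal.mul_eq_left (Cardinal.aleph0_le_aleph 1)
    Cardinal.aleph0_lt_aleph_one.le Cardinal.aleph0_ne_zero

end PartB4
end TLAux

/-- The successor step of the construction: adjoining to a countable 2-ladder `P` with no
largest element a new chain `{b_n}` with `a_n < b_n` (for a strictly increasing cofinal
sequence `a`) again yields a countable 2-ladder with no largest element; and the union of
the resulting ω₁-chain of lattices is a 2-ladder of cardinality ℵ₁. -/
theorem two_ladder_successor_step_and_aleph_one
    (P : Type*) [Lattice P] [Countable P]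
    (hP : IsLadder 2 P) (hnomax : ∀ x : P, ∃ y : P, x < y)
    (a : ℕ → P) (ha : StrictMono a) (hcof : ∀ x : P, ∃ n, x ≤ a n) :
    (∃ inst : Lattice (P ⊕ ℕ),
      (∀ u v : P ⊕ ℕ, inst.le u v ↔ extLe P a u v) ∧
      @IsLadder 2 (P ⊕ ℕ) inst ∧
      (∀ u : P ⊕ ℕ, ∃ v : P ⊕ ℕ, inst.lt u v) ∧
      Countable (P ⊕ ℕ)) ∧
    (∃ (L : Type) (_ : Lattice L), Cardinal.mk L = Cardinal.aleph 1 ∧ IsLadder 2 L) :=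
  ⟨TLAux.partA hP ha.monotone hcof,
    ⟨TLAux.P2, TLAux.bigLattice, TLAux.bigCard, TLAux.bigLadder⟩⟩
end

section
/- The free lattice on 3 generators is not congruence-finite: its congruence lattice is infinite. -/
namespace FL3Aux

/-- kernel congruence of a lattice hom -/
def latKer {α β : Type*} [Lattice α] [Lattice β] (g : LatticeHom α β) : LatticeCongruence α where
  r a b := g a = g b
  refl _ := rfl
  symm h := h.symm
  trans h1 h2 := h1.trans h2
  sup h1 h2 := by simp only [map_sup]; rw [h1, h2]
  inf h1 h2 := by simp only [map_inf]; rw [h1, h2]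

/-- representative map for the matching {(2j - c, 2j + 1 - c) : j ∈ ℤ} -/
def repM (c : ℤ) (i : ℤ) : ℤ := i - (i + c) % 2

/-- representative map for the partial matching {(i, -1-i) : 0 ≤ i < m} -/
def repC (m : ℕ) (i : ℤ) : ℤ :=
  if -(m : ℤ) ≤ i ∧ i < (m : ℤ) then (if i < 0 then i else -1 - i) else i

/-- representative map for an upper bound used to compute a meet with a join -/
def repE (c : ℤ) (j : ℕ) (i : ℤ) : ℤ :=
  if -(j : ℤ) - 1 ≤ i ∧ i ≤ (j : ℤ) then 0 else repM c i

abbrev SM (c : ℤ) : Setoid ℤ := Setoid.ker (repM c)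
abbrev SC (m : ℕ) : Setoid ℤ := Setoid.ker (repC m)
abbrev SE (c : ℤ) (j : ℕ) : Setoid ℤ := Setoid.ker (repE c j)

theorem scm_mono {j m : ℕ} (h : j ≤ m) : SC j ≤ SC m := by
  rw [Setoid.le_def]
  intro a b hab
  simp only [SC, Setoid.ker_def, repC] at hab ⊢
  split_ifs at hab ⊢ <;> omega

theorem base_lemma (m : ℕ) (hm : 1 ≤ m) : SM 1 ⊓ SC m = SC 1 := by
  apply le_antisymm
  · rw [Setoid.le_def]
    intro a b hab
    rw [Setoid.inf_iff_and] at hab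
    obtain ⟨h1, h2⟩ := hab
    simp only [SM, SC, Setoid.ker_def, repM, repC] at h1 h2 ⊢
    split_ifs at h2 ⊢ <;> omega
  · apply le_inf
    · rw [Setoid.le_def]
      intro a b hab
      simp only [SM, SC, Setoid.ker_def, repM, repC] at hab ⊢
      split_ifs at hab <;> omega
    · rw [Setoid.le_def]
      intro a b hab
      simp only [SC, Setoid.ker_def, repC] at hab ⊢
      split_ifs at hab ⊢ <;> omega

theorem sm_le_se (c : ℤ) (j : ℕ) (hc : ((j : ℤ) + c) % 2 = 1) : SM c ≤ SE c j := by
  rw [Setoid.le_def]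
  intro a b hab
  simp only [SM, SE, Setoid.ker_def, repM, repE] at hab ⊢
  split_ifs <;> omega

theorem sc_le_se (c : ℤ) (j : ℕ) : SC j ≤ SE c j := by
  rw [Setoid.le_def]
  intro a b hab
  simp only [SC, SE, Setoid.ker_def, repC, repE, repM] at hab ⊢
  split_ifs at hab ⊢ <;> omega

theorem main_step (c : ℤ) (m j : ℕ) (hj : 1 ≤ j) (hjm : j < m)
    (hc : ((j : ℤ) + c) % 2 = 1) :
    SC m ⊓ (SM c ⊔ SC j) = SC (j + 1) := by
  apply le_antisymm
  · rw [Setoid.le_def]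
    intro a b hab
    rw [Setoid.inf_iff_and] at hab
    obtain ⟨h1, h2⟩ := hab
    have h3 : SE c j a b :=
      Setoid.le_def.mp (sup_le (sm_le_se c j hc) (sc_le_se c j)) h2
    simp only [SC, SE, Setoid.ker_def, repC, repE, repM] at h1 h3 ⊢
    split_ifs at h1 h3 ⊢ <;> omega
  · apply le_inf (scm_mono (by omega))
    rw [Setoid.le_def]
    intro a b hab
    by_cases hab' : a = b
    · subst hab'; exact (SM c ⊔ SC j).refl' a
    have hpair : (0 ≤ a ∧ a ≤ (j : ℤ) ∧ b = -1 - a) ∨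
        (0 ≤ b ∧ b ≤ (j : ℤ) ∧ a = -1 - b) := by
      simp only [SC, Setoid.ker_def, repC] at hab
      split_ifs at hab <;> omega
    have key : ∀ i : ℤ, 0 ≤ i → i ≤ (j : ℤ) → (SM c ⊔ SC j) i (-1 - i) := by
      intro i h0 hij
      by_cases hlt : i < (j : ℤ)
      · apply Setoid.le_def.mp le_sup_right
        simp only [SC, Setoid.ker_def, repC]
        split_ifs <;> omega
      · have hi : i = (j : ℤ) := by omega
        subst hi
        have s1 : (SM c ⊔ SC j) (j : ℤ) ((j : ℤ) - 1) := by
          apply Setoid.le_def.mp le_sup_left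
          simp only [SM, Setoid.ker_def, repM]; omega
        have s2 : (SM c ⊔ SC j) ((j : ℤ) - 1) (-(j : ℤ)) := by
          apply Setoid.le_def.mp le_sup_right
          simp only [SC, Setoid.ker_def, repC]
          split_ifs <;> omega
        have s3 : (SM c ⊔ SC j) (-(j : ℤ)) (-1 - (j : ℤ)) := by
          apply Setoid.le_def.mp le_sup_left
          simp only [SM, Setoid.ker_def, repM]; omega
        exact (SM c ⊔ SC j).trans' ((SM c ⊔ SC j).trans' s1 s2) s3
    rcases hpair with ⟨h0, hle, rfl⟩ | ⟨h0, hle, rfl⟩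
    · exact key a h0 hle
    · exact (SM c ⊔ SC j).symm' (key b h0 hle)

theorem sc_ne (m : ℕ) : SC m ≠ SC (m + 1) := by
  intro h
  have h2 : SC (m + 1) (m : ℤ) (-1 - (m : ℤ)) := by
    simp only [SC, Setoid.ker_def, repC]
    split_ifs <;> omega
  rw [← h] at h2
  simp only [SC, Setoid.ker_def, repC] at h2
  split_ifs at h2 <;> omega

end FL3Aux

open FL3Aux in
/-- The free lattice on three generators (characterized by its universal property)
is not congruence-finite: it has infinitely many congruences. -/
theorem free_lattice_three_generators_infinitely_many_congruences
    (F : Type) [Lattice F] (x : Fin 3 → F)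
    (huniv : ∀ (L : Type) [Lattice L] (f : Fin 3 → L),
      ∃! g : LatticeHom F L, ∀ i, g (x i) = f i) :
    Infinite (LatticeCongruence F) := by
  have exg : ∀ m : ℕ, ∃ g : LatticeHom F (Setoid ℤ),
      ∀ i, g (x i) = ![SM 0, SM 1, SC m] i :=
    fun m => (huniv (Setoid ℤ) ![SM 0, SM 1, SC m]).exists
  choose g hg using exg
  have hgA : ∀ m, g m (x 0) = SM 0 := fun m => by simpa using hg m 0
  have hgB : ∀ m, g m (x 1) = SM 1 := fun m => by simpa using hg m 1
  have hgC : ∀ m, g m (x 2) = SC m := fun m => by simpa using hg m 2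
  -- the terms
  let τ : ℕ → F := fun k =>
    Nat.rec (x 1 ⊓ x 2) (fun k t => x 2 ⊓ ((if Even k then x 0 else x 1) ⊔ t)) k
  have hτ0 : τ 0 = x 1 ⊓ x 2 := rfl
  have hτs : ∀ k, τ (k + 1) = x 2 ⊓ ((if Even k then x 0 else x 1) ⊔ τ k) :=
    fun k => rfl
  have heval : ∀ m k : ℕ, k + 1 ≤ m → g m (τ k) = SC (k + 1) := by
    intro m k
    induction k with
    | zero =>
      intro h
      rw [hτ0, map_inf, hgB, hgC]
      exact base_lemma m h
    | succ k ih =>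
      intro h
      rw [hτs, map_inf, map_sup, hgC]
      rcases Nat.even_or_odd k with he | ho
      · rw [if_pos he, hgA, ih (by omega)]
        obtain ⟨t, ht⟩ := he
        exact main_step 0 m (k + 1) (by omega) (by omega) (by push_cast; omega)
      · rw [if_neg (Nat.not_even_iff_odd.mpr ho), hgB, ih (by omega)]
        obtain ⟨t, ht⟩ := ho
        exact main_step 1 m (k + 1) (by omega) (by omega) (by push_cast; omega)
  have hstab : ∀ m' : ℕ, g (m' + 1) (τ (m' + 1)) = SC (m' + 1) := by
    intro m'
    rw [hτs, map_inf, map_sup, hgC, heval (m' + 1) m' le_rfl]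
    exact inf_eq_left.mpr le_sup_right
  -- distinctness
  have hdist : ∀ m m' : ℕ, 1 ≤ m → m < m' → latKer (g m) ≠ latKer (g m') := by
    intro m m' h1 h2 heq
    obtain ⟨k, rfl⟩ : ∃ k, m = k + 1 := ⟨m - 1, by omega⟩
    have e1 : (latKer (g (k + 1))).r (τ k) (τ (k + 1)) := by
      show g (k + 1) (τ k) = g (k + 1) (τ (k + 1))
      rw [heval (k + 1) k le_rfl, hstab k]
    rw [heq] at e1
    have e2 : g m' (τ k) = g m' (τ (k + 1)) := e1
    rw [heval m' k (by omega), heval m' (k + 1) (by omega)] at e2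
    exact sc_ne (k + 1) e2
  apply Infinite.of_injective (fun n : ℕ => latKer (g (n + 1)))
  intro a b hab
  by_contra hne
  rcases Nat.lt_or_ge a b with hlt | hge
  · exact hdist (a + 1) (b + 1) (by omega) (by omega) hab
  · exact hdist (b + 1) (a + 1) (by omega) (by omega) hab.symm
end

section
/- Let D be a distributive algebraic lattice whose set S of compact elements satisfies |S| ≤ ℵ₀ (i.e., D has countably many compact elements). Then S is a countable distributive {∨,0}-semilattice and S is the directed union of an increasing ω-chain of finite distributive {∨,0}-subsemilattices. -/
open CompleteLattice

section PudlakAux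

variable {D : Type*} [CompleteLattice D]

open scoped Classical

private lemma isCompactElement_bot' : IsCompactElement (⊥ : D) :=
  fun _ _ hne _ _ _ => hne.elim fun x hx => ⟨x, hx, bot_le⟩

private lemma compact_sup' {a b : D} (ha : IsCompactElement a) (hb : IsCompactElement b) :
    IsCompactElement (a ⊔ b) := by
  classical
  have := isCompactElement_finsetSup (f := (id : D → D)) ({a, b} : Finset D)
    (fun x hx => by
      rcases Finset.mem_insert.1 hx with h | h
      · simpa [h] using ha
      · simp only [Finset.mem_singleton] at h
        simpa [h] using hb)
  simpa using this

/-- Given a compact `p` below the sup of a finite set `J'` in a compactly generated lattice,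
one can choose compact elements `h i ≤ i` whose sup dominates `p`. -/
private lemma cover_exists [IsCompactlyGenerated D] (J' : Finset D) (p : D)
    (hp : IsCompactElement p) (hle : p ≤ J'.sup id) :
    ∃ h : D → D, (∀ i, IsCompactElement (h i)) ∧ (∀ i, h i ≤ i) ∧ p ≤ J'.sup h := by
  classical
  choose sf hsf1 hsf2 using (IsCompactlyGenerated.exists_sSup_eq (α := D))
  set s : Set D := {x | IsCompactElement x ∧ ∃ i ∈ J', x ≤ i} with hs
  have hle2 : p ≤ sSup s := by
    refine hle.trans (Finset.sup_le fun i hi => ?_)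
    have : (i : D) = sSup (sf i) := (hsf2 i).symm
    calc (id i : D) = sSup (sf i) := this
      _ ≤ sSup s := sSup_le_sSup (fun x hx =>
          ⟨hsf1 i x hx, ⟨i, hi, (hsf2 i) ▸ le_sSup hx⟩⟩)
  obtain ⟨t, hts, hpt⟩ := (isCompactElement_iff_exists_le_sSup_of_le_sSup D p).1 hp s hle2
  have hg' : ∀ x : D, ∃ i : D, x ∈ t → (i ∈ J' ∧ x ≤ i) := by
    intro x
    by_cases hxt : x ∈ t
    · obtain ⟨i, hi, hxi⟩ := (hts hxt).2
      exact ⟨i, fun _ => ⟨hi, hxi⟩⟩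
    · exact ⟨⊥, fun h => absurd h hxt⟩
  choose g hg using hg'
  refine ⟨fun i => (t.filter (fun x => g x = i)).sup id, ?_, ?_, ?_⟩
  · intro i
    exact isCompactElement_finsetSup _ (fun x hx => (hts (Finset.mem_filter.1 hx).1).1)
  · intro i
    refine Finset.sup_le fun x hx => ?_
    obtain ⟨hxt, hgx⟩ := Finset.mem_filter.1 hx
    exact hgx ▸ (hg x hxt).2
  · refine hpt.trans (Finset.sup_le fun x hxt => ?_)
    have h1 : x ≤ (t.filter (fun x' => g x' = g x)).sup id :=
      Finset.le_sup (f := (id : D → D)) (Finset.mem_filter.2 ⟨hxt, rfl⟩)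
    exact h1.trans (Finset.le_sup (f := fun i => (t.filter (fun x' => g x' = i)).sup id)
      (hg x hxt).1)

open scoped Classical in
private noncomputable def coverChoice [IsCompactlyGenerated D] (J' : Finset D) (p : D) : D → D :=
  if h : IsCompactElement p ∧ p ≤ J'.sup id then (cover_exists J' p h.1 h.2).choose
  else fun _ => ⊥

private lemma coverChoice_compact [IsCompactlyGenerated D] (J' : Finset D) (p : D) (i : D) :
    IsCompactElement (coverChoice J' p i) := by
  rw [coverChoice]
  split_ifs with h
  · exact (cover_exists J' p h.1 h.2).choose_spec.1 i
  · exact isCompactElement_bot'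

private lemma coverChoice_le [IsCompactlyGenerated D] (J' : Finset D) (p : D) (i : D) :
    coverChoice J' p i ≤ i := by
  rw [coverChoice]
  split_ifs with h
  · exact (cover_exists J' p h.1 h.2).choose_spec.2.1 i
  · exact bot_le

private lemma coverChoice_spec [IsCompactlyGenerated D] (J' : Finset D) (p : D)
    (hp : IsCompactElement p) (hle : p ≤ J'.sup id) :
    p ≤ J'.sup (coverChoice J' p) := by
  rw [coverChoice, dif_pos ⟨hp, hle⟩]
  exact (cover_exists J' p hp hle).choose_spec.2.2

open scoped Classical in
/-- The recursively enlarged compact approximations indexed by (join-irreducible) elements. -/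
private noncomputable def pudlakV [IsCompactlyGenerated D] (J L : Finset D) (c : D → D)
    (j : D) : D :=
  c j ⊔ (J.filter (fun a => j < a)).attach.sup (fun j' =>
    L.sup (fun m =>
      if pudlakV J L c j'.1 ≤ m then
        coverChoice (J.filter (· ≤ j'.1 ⊓ m)) (pudlakV J L c j'.1) j
      else ⊥))
termination_by (J.filter (fun a => j < a)).card
decreasing_by
  · have hj' := j'.2
    rw [Finset.mem_filter] at hj'
    refine Finset.card_lt_card ⟨fun x hx => ?_, fun hsub => ?_⟩
    · rw [Finset.mem_filter] at hx ⊢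
      exact ⟨hx.1, lt_trans hj'.2 hx.2⟩
    · have := hsub (Finset.mem_filter.2 ⟨hj'.1, hj'.2⟩)
      rw [Finset.mem_filter] at this
      exact lt_irrefl _ this.2

private lemma pudlakV_le [IsCompactlyGenerated D] {J L : Finset D} {c : D → D}
    (hc : ∀ x, c x ≤ x) (j : D) : pudlakV J L c j ≤ j := by
  rw [pudlakV]
  refine sup_le (hc j) (Finset.sup_le fun j' _ => Finset.sup_le fun m _ => ?_)
  split_ifs
  · exact coverChoice_le _ _ _
  · exact bot_le

private lemma pudlakV_compact [IsCompactlyGenerated D] {J L : Finset D} {c : D → D}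
    (hc : ∀ x, IsCompactElement (c x)) (j : D) : IsCompactElement (pudlakV J L c j) := by
  rw [pudlakV]
  refine compact_sup' (hc j) (isCompactElement_finsetSup _ fun j' _ =>
    isCompactElement_finsetSup _ fun m _ => ?_)
  split_ifs
  · exact coverChoice_compact _ _ _
  · exact isCompactElement_bot'

private lemma pudlakV_key [IsCompactlyGenerated D] {J L : Finset D} {c : D → D}
    (hcle : ∀ x, c x ≤ x) (hccpt : ∀ x, IsCompactElement (c x))
    (hJL : J ⊆ L) (hLinf : ∀ x ∈ L, ∀ y ∈ L, x ⊓ y ∈ L)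
    (hdecomp : ∀ x ∈ L, (J.filter (· ≤ x)).sup id = x)
    {j m : D} (hj : j ∈ J) (hm : m ∈ L) (hjm : pudlakV J L c j ≤ m) :
    pudlakV J L c j ≤ (J.filter (· ≤ j ⊓ m)).sup (pudlakV J L c) := by
  classical
  by_cases hle : j ≤ m
  · have h1 : j ⊓ m = j := inf_eq_left.2 hle
    rw [h1]
    exact Finset.le_sup (Finset.mem_filter.2 ⟨hj, le_refl j⟩)
  · have hp : IsCompactElement (pudlakV J L c j) := pudlakV_compact hccpt j
    have hpj : pudlakV J L c j ≤ j := pudlakV_le hcle j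
    have hpjm : pudlakV J L c j ≤ j ⊓ m := le_inf hpj hjm
    have hsupid : (J.filter (· ≤ j ⊓ m)).sup id = j ⊓ m :=
      hdecomp _ (hLinf j (hJL hj) m hm)
    have hcov := coverChoice_spec (J.filter (· ≤ j ⊓ m)) (pudlakV J L c j) hp
      (by rw [hsupid]; exact hpjm)
    refine hcov.trans (Finset.sup_mono_fun ?_)
    intro i hi
    rw [Finset.mem_filter] at hi
    have hij : i < j := lt_of_le_of_ne (hi.2.trans inf_le_left)
      (fun h => hle (h ▸ hi.2.trans inf_le_right))
    conv_rhs => rw [pudlakV]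
    refine le_sup_of_le_right ?_
    have hjmem : j ∈ J.filter (fun a => i < a) := Finset.mem_filter.2 ⟨hj, hij⟩
    refine le_trans ?_
      (Finset.le_sup (Finset.mem_attach (J.filter (fun a => i < a)) ⟨j, hjmem⟩))
    refine le_trans ?_ (Finset.le_sup hm)
    rw [if_pos hjm]

private lemma inf_finsetSup_eq {β : Type*}
    (hdistrib : ∀ a b c : D, a ⊓ (b ⊔ c) = (a ⊓ b) ⊔ (a ⊓ c))
    (a : D) (s : Finset β) (f : β → D) :
    a ⊓ s.sup f = s.sup fun b => a ⊓ f b := by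
  classical
  induction s using Finset.cons_induction with
  | empty => simp
  | cons x s hx ih => rw [Finset.sup_cons, Finset.sup_cons, hdistrib, ih]

private lemma finsetSup_inf_eq {β : Type*}
    (hdistrib : ∀ a b c : D, a ⊓ (b ⊔ c) = (a ⊓ b) ⊔ (a ⊓ c))
    (a : D) (s : Finset β) (f : β → D) :
    s.sup f ⊓ a = s.sup fun b => f b ⊓ a := by
  rw [inf_comm, inf_finsetSup_eq hdistrib]
  simp_rw [inf_comm]

set_option maxHeartbeats 2000000 in
/-- Pudlák's lemma, in the setting of the compact elements of a distributive
algebraic lattice: every finite set of compact elements is contained in a finite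
distributive `{∨,0}`-subsemilattice of the compact elements. -/
private lemma pudlak [IsCompactlyGenerated D]
    (hdistrib : ∀ a b c : D, a ⊓ (b ⊔ c) = (a ⊓ b) ⊔ (a ⊓ c))
    (F : Finset D) (hF : ∀ f ∈ F, IsCompactElement f) :
    ∃ T : Finset D, F ⊆ T ∧ (∀ t ∈ T, IsCompactElement t) ∧ ⊥ ∈ T ∧
      (∀ a ∈ T, ∀ b ∈ T, a ⊔ b ∈ T) ∧
      (∀ a ∈ T, ∀ b ∈ T, ∀ c ∈ T, c ≤ a ⊔ b →
        ∃ a' ∈ T, ∃ b' ∈ T, a' ≤ a ∧ b' ≤ b ∧ c = a' ⊔ b') := by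
  classical
  -- the finite distributive sublattice of `D` generated by `F`
  set g : Finset D → D := fun X => X.inf id with hg
  set L : Finset D :=
    ((F.powerset.filter (fun X => X.Nonempty)).powerset).image (fun 𝒳 => 𝒳.sup g) with hL
  have memL : ∀ x : D, x ∈ L ↔
      ∃ 𝒳 : Finset (Finset D), 𝒳 ⊆ F.powerset.filter (fun X => X.Nonempty) ∧ x = 𝒳.sup g := by
    intro x
    simp only [hL, Finset.mem_image, Finset.mem_powerset]
    constructor
    · rintro ⟨𝒳, h1, h2⟩; exact ⟨𝒳, h1, h2.symm⟩
    · rintro ⟨𝒳, h1, h2⟩; exact ⟨𝒳, h1, h2.symm⟩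
  have hLbot : (⊥ : D) ∈ L := (memL ⊥).2 ⟨∅, by simp⟩
  have hFL : ∀ f ∈ F, f ∈ L := by
    intro f hf
    refine (memL f).2 ⟨{{f}}, ?_, by simp [hg]⟩
    intro X hX
    rw [Finset.mem_singleton] at hX
    subst hX
    refine Finset.mem_filter.2 ⟨Finset.mem_powerset.2 ?_, ⟨f, Finset.mem_singleton_self f⟩⟩
    intro x hx
    rw [Finset.mem_singleton] at hx
    exact hx ▸ hf
  have hLsup : ∀ x ∈ L, ∀ y ∈ L, x ⊔ y ∈ L := by
    intro x hx y hy
    obtain ⟨𝒳, h𝒳, rfl⟩ := (memL x).1 hx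
    obtain ⟨𝒴, h𝒴, rfl⟩ := (memL y).1 hy
    exact (memL _).2 ⟨𝒳 ∪ 𝒴, Finset.union_subset h𝒳 h𝒴, (Finset.sup_union).symm⟩
  have hLinf : ∀ x ∈ L, ∀ y ∈ L, x ⊓ y ∈ L := by
    intro x hx y hy
    obtain ⟨𝒳, h𝒳, rfl⟩ := (memL x).1 hx
    obtain ⟨𝒴, h𝒴, rfl⟩ := (memL y).1 hy
    refine (memL _).2 ⟨(𝒳 ×ˢ 𝒴).image (fun p => p.1 ∪ p.2), ?_, ?_⟩
    · intro X hX
      rw [Finset.mem_image] at hX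
      obtain ⟨p, hp, rfl⟩ := hX
      rw [Finset.mem_product] at hp
      have h1 := Finset.mem_filter.1 (h𝒳 hp.1)
      have h2 := Finset.mem_filter.1 (h𝒴 hp.2)
      refine Finset.mem_filter.2 ⟨Finset.mem_powerset.2 ?_, ?_⟩
      · exact Finset.union_subset (Finset.mem_powerset.1 h1.1) (Finset.mem_powerset.1 h2.1)
      · obtain ⟨z, hz⟩ := h1.2
        exact ⟨z, Finset.mem_union_left _ hz⟩
    · rw [Finset.sup_image]
      rw [finsetSup_inf_eq hdistrib]
      have : ∀ X : Finset D, g X ⊓ 𝒴.sup g = 𝒴.sup (fun Y => g X ⊓ g Y) := fun X =>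
        inf_finsetSup_eq hdistrib _ _ _
      calc 𝒳.sup (fun X => g X ⊓ 𝒴.sup g) = 𝒳.sup (fun X => 𝒴.sup (fun Y => g X ⊓ g Y)) := by
            refine Finset.sup_congr rfl fun X _ => this X
        _ = (𝒳 ×ˢ 𝒴).sup (fun p => g p.1 ⊓ g p.2) :=
            (Finset.sup_product_left 𝒳 𝒴 (fun p => g p.1 ⊓ g p.2)).symm
        _ = (𝒳 ×ˢ 𝒴).sup ((fun X => X.inf id) ∘ fun p => p.1 ∪ p.2) := by
            refine Finset.sup_congr rfl fun p _ => ?_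
            simp only [Function.comp, hg, Finset.inf_union]
  -- the "join-irreducible" elements of `L`
  set J : Finset D := L.filter (fun j => ∀ a ∈ L, ∀ b ∈ L, a ⊔ b = j → a = j ∨ b = j) with hJ
  have hJL : J ⊆ L := Finset.filter_subset _ _
  have hdecomp : ∀ x ∈ L, (J.filter (· ≤ x)).sup id = x := by
    suffices H : ∀ n : ℕ, ∀ x ∈ L, (L.filter (· < x)).card ≤ n →
        (J.filter (· ≤ x)).sup id = x by
      exact fun x hx => H _ x hx le_rfl
    intro n
    induction n with
    | zero =>
      intro x hx hcard
      refine le_antisymm (Finset.sup_le fun j hj => (Finset.mem_filter.1 hj).2) ?_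
      have hirr : ∀ a ∈ L, ∀ b ∈ L, a ⊔ b = x → a = x ∨ b = x := by
        intro a ha b hb hab
        by_contra hcon
        push_neg at hcon
        have hax : a < x := lt_of_le_of_ne (hab ▸ le_sup_left) hcon.1
        have : a ∈ L.filter (· < x) := Finset.mem_filter.2 ⟨ha, hax⟩
        have := Finset.card_pos.2 ⟨a, this⟩
        omega
      have hxJ : x ∈ J := Finset.mem_filter.2 ⟨hx, hirr⟩
      exact Finset.le_sup (f := (id : D → D)) (Finset.mem_filter.2 ⟨hxJ, le_refl x⟩)
    | succ n ih =>
      intro x hx hcard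
      refine le_antisymm (Finset.sup_le fun j hj => (Finset.mem_filter.1 hj).2) ?_
      by_cases hirr : ∀ a ∈ L, ∀ b ∈ L, a ⊔ b = x → a = x ∨ b = x
      · have hxJ : x ∈ J := Finset.mem_filter.2 ⟨hx, hirr⟩
        exact Finset.le_sup (f := (id : D → D)) (Finset.mem_filter.2 ⟨hxJ, le_refl x⟩)
      · push_neg at hirr
        obtain ⟨a, ha, b, hb, hab, hax, hbx⟩ := hirr
        have halt : a < x := lt_of_le_of_ne (hab ▸ le_sup_left) hax
        have hblt : b < x := lt_of_le_of_ne (hab ▸ le_sup_right) hbx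
        have hcarda : (L.filter (· < a)).card ≤ n := by
          have hss : L.filter (· < a) ⊂ L.filter (· < x) := by
            refine ⟨fun y hy => ?_, fun hsub => ?_⟩
            · rw [Finset.mem_filter] at hy ⊢
              exact ⟨hy.1, lt_trans hy.2 halt⟩
            · have := hsub (Finset.mem_filter.2 ⟨ha, halt⟩)
              rw [Finset.mem_filter] at this
              exact lt_irrefl _ this.2
          have := Finset.card_lt_card hss
          omega
        have hcardb : (L.filter (· < b)).card ≤ n := by
          have hss : L.filter (· < b) ⊂ L.filter (· < x) := by
            refine ⟨fun y hy => ?_, fun hsub => ?_⟩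
            · rw [Finset.mem_filter] at hy ⊢
              exact ⟨hy.1, lt_trans hy.2 hblt⟩
            · have := hsub (Finset.mem_filter.2 ⟨hb, hblt⟩)
              rw [Finset.mem_filter] at this
              exact lt_irrefl _ this.2
          have := Finset.card_lt_card hss
          omega
        have hA := ih a ha hcarda
        have hB := ih b hb hcardb
        have hmono : ∀ z : D, z ≤ x →
            (J.filter (· ≤ z)).sup id ≤ (J.filter (· ≤ x)).sup id := by
          intro z hz
          refine Finset.sup_mono fun y hy => ?_
          rw [Finset.mem_filter] at hy ⊢
          exact ⟨hy.1, hy.2.trans hz⟩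
        calc x = a ⊔ b := hab.symm
          _ ≤ (J.filter (· ≤ x)).sup id ⊔ (J.filter (· ≤ x)).sup id :=
            sup_le_sup (hA ▸ hmono a halt.le) (hB ▸ hmono b hblt.le)
          _ = (J.filter (· ≤ x)).sup id := sup_idem _
  have hprime : ∀ j ∈ J, ∀ x ∈ L, ∀ y ∈ L, j ≤ x ⊔ y → j ≤ x ∨ j ≤ y := by
    intro j hj x hx y hy hjxy
    have hj' := Finset.mem_filter.1 hj
    have hkey : (j ⊓ x) ⊔ (j ⊓ y) = j := by
      rw [← hdistrib]
      exact inf_eq_left.2 hjxy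
    rcases hj'.2 (j ⊓ x) (hLinf j hj'.1 x hx) (j ⊓ y) (hLinf j hj'.1 y hy) hkey with h | h
    · exact Or.inl (inf_eq_left.1 h)
    · exact Or.inr (inf_eq_left.1 h)
  -- the initial compact approximations
  set c : D → D := fun x => F.attach.sup (fun f => coverChoice (J.filter (· ≤ f.1)) f.1 x)
    with hc
  have hcle : ∀ x, c x ≤ x := fun x =>
    Finset.sup_le fun f _ => coverChoice_le _ _ _
  have hccpt : ∀ x, IsCompactElement (c x) := fun x =>
    isCompactElement_finsetSup _ fun f _ => coverChoice_compact _ _ _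
  set V : D → D := pudlakV J L c with hV
  have hVle : ∀ x, V x ≤ x := fun x => pudlakV_le hcle x
  have hVcpt : ∀ x, IsCompactElement (V x) := fun x => pudlakV_compact hccpt x
  have hcV : ∀ x, c x ≤ V x := by
    intro x
    rw [hV, pudlakV]
    exact le_sup_left
  have hcF : ∀ f ∈ F, f ≤ (J.filter (· ≤ f)).sup V := by
    intro f hf
    have h1 : f ≤ (J.filter (· ≤ f)).sup (coverChoice (J.filter (· ≤ f)) f) := by
      refine coverChoice_spec _ _ (hF f hf) ?_
      rw [hdecomp f (hFL f hf)]
    refine h1.trans (Finset.sup_mono_fun fun j _ => ?_)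
    refine le_trans ?_ (hcV j)
    exact Finset.le_sup (f := fun f' : {x // x ∈ F} => coverChoice (J.filter (· ≤ f'.1)) f'.1 j)
      (Finset.mem_attach F ⟨f, hf⟩)
  -- the semilattice homomorphic image
  set U : D → D := fun x => (J.filter (· ≤ x)).sup V with hU
  have hUle : ∀ x, U x ≤ x := by
    intro x
    refine Finset.sup_le fun j hj => ?_
    exact (hVle j).trans (Finset.mem_filter.1 hj).2
  have hUmono : ∀ x y : D, x ≤ y → U x ≤ U y := by
    intro x y hxy
    refine Finset.sup_mono fun j hj => ?_
    rw [Finset.mem_filter] at hj ⊢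
    exact ⟨hj.1, hj.2.trans hxy⟩
  have hUcpt : ∀ x, IsCompactElement (U x) :=
    fun x => isCompactElement_finsetSup _ fun j _ => hVcpt j
  have hUF : ∀ f ∈ F, U f = f := fun f hf => le_antisymm (hUle f) (hcF f hf)
  have hUhom : ∀ x ∈ L, ∀ y ∈ L, U (x ⊔ y) = U x ⊔ U y := by
    intro x hx y hy
    refine le_antisymm ?_ (sup_le (hUmono _ _ le_sup_left) (hUmono _ _ le_sup_right))
    refine Finset.sup_le fun j hj => ?_
    rw [Finset.mem_filter] at hj
    rcases hprime j hj.1 x hx y hy hj.2 with h | h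
    · exact le_sup_of_le_left (Finset.le_sup (Finset.mem_filter.2 ⟨hj.1, h⟩))
    · exact le_sup_of_le_right (Finset.le_sup (Finset.mem_filter.2 ⟨hj.1, h⟩))
  have hUkey : ∀ j ∈ J, ∀ m ∈ L, V j ≤ m → V j ≤ U (j ⊓ m) := by
    intro j hj m hm hjm
    exact pudlakV_key hcle hccpt hJL hLinf hdecomp hj hm hjm
  -- the subsemilattice
  refine ⟨L.image U, ?_, ?_, ?_, ?_, ?_⟩
  · intro f hf
    exact Finset.mem_image.2 ⟨f, hFL f hf, hUF f hf⟩
  · intro t ht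
    obtain ⟨x, _, rfl⟩ := Finset.mem_image.1 ht
    exact hUcpt x
  · refine Finset.mem_image.2 ⟨⊥, hLbot, ?_⟩
    exact le_antisymm (hUle ⊥) bot_le
  · intro a ha b hb
    obtain ⟨x, hx, rfl⟩ := Finset.mem_image.1 ha
    obtain ⟨y, hy, rfl⟩ := Finset.mem_image.1 hb
    exact Finset.mem_image.2 ⟨x ⊔ y, hLsup x hx y hy, hUhom x hx y hy⟩
  · intro a ha b hb cc hcc hle
    obtain ⟨xa, hxa, rfl⟩ := Finset.mem_image.1 ha
    obtain ⟨xb, hxb, rfl⟩ := Finset.mem_image.1 hb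
    obtain ⟨xc, hxc, rfl⟩ := Finset.mem_image.1 hcc
    refine ⟨U (xc ⊓ xa), Finset.mem_image.2 ⟨_, hLinf xc hxc xa hxa, rfl⟩,
      U (xc ⊓ xb), Finset.mem_image.2 ⟨_, hLinf xc hxc xb hxb, rfl⟩,
      hUmono _ _ inf_le_right, hUmono _ _ inf_le_right, ?_⟩
    refine le_antisymm ?_ (sup_le (hUmono _ _ inf_le_left) (hUmono _ _ inf_le_left))
    refine Finset.sup_le fun j hj => ?_
    rw [Finset.mem_filter] at hj
    have hVj : V j ≤ xa ⊔ xb := by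
      refine le_trans (le_trans (Finset.le_sup (Finset.mem_filter.2 hj)) hle) ?_
      exact sup_le_sup (hUle xa) (hUle xb)
    have h1 : V j ≤ U (j ⊓ (xa ⊔ xb)) :=
      hUkey j hj.1 (xa ⊔ xb) (hLsup xa hxa xb hxb) hVj
    rw [hdistrib j xa xb] at h1
    rw [hUhom _ (hLinf j (hJL hj.1) xa hxa) _ (hLinf j (hJL hj.1) xb hxb)] at h1
    refine h1.trans (sup_le_sup ?_ ?_)
    · exact hUmono _ _ (inf_le_inf_right xa hj.2)
    · exact hUmono _ _ (inf_le_inf_right xb hj.2)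

end PudlakAux

/-- Let `D` be a distributive algebraic lattice with countably many compact elements.
Then the set `S` of compact elements of `D` is a countable distributive
`{∨,0}`-semilattice, and `S` is the union of an increasing ω-chain of finite
distributive `{∨,0}`-subsemilattices. -/
theorem compacts_union_of_finite_distributive_subsemilattices
    (D : Type*) [CompleteLattice D] [IsCompactlyGenerated D]
    (hdistrib : ∀ a b c : D, a ⊓ (b ⊔ c) = (a ⊓ b) ⊔ (a ⊓ c))
    (S : Set D) (hS : S = {x : D | IsCompactElement x})
    (hcount : S.Countable) :
    (⊥ ∈ S) ∧ (∀ a ∈ S, ∀ b ∈ S, a ⊔ b ∈ S) ∧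
    (∀ a ∈ S, ∀ b ∈ S, ∀ c ∈ S, c ≤ a ⊔ b →
      ∃ a' ∈ S, ∃ b' ∈ S, a' ≤ a ∧ b' ≤ b ∧ c = a' ⊔ b') ∧
    ∃ T : ℕ → Set D, Monotone T ∧ (⋃ n, T n) = S ∧
      ∀ n, T n ⊆ S ∧ (T n).Finite ∧ ⊥ ∈ T n ∧
        (∀ a ∈ T n, ∀ b ∈ T n, a ⊔ b ∈ T n) ∧
        (∀ a ∈ T n, ∀ b ∈ T n, ∀ c ∈ T n, c ≤ a ⊔ b →
          ∃ a' ∈ T n, ∃ b' ∈ T n, a' ≤ a ∧ b' ≤ b ∧ c = a' ⊔ b') := by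
  classical
  subst hS
  have hbot : (⊥ : D) ∈ {x : D | IsCompactElement x} := isCompactElement_bot'
  refine ⟨hbot, ?_, ?_, ?_⟩
  · intro a ha b hb
    exact compact_sup' ha hb
  · -- distributivity of the semilattice of compact elements
    intro a ha b hb c hc hcab
    obtain ⟨h, hcpt, hle, hcov⟩ := cover_exists ({c ⊓ a, c ⊓ b} : Finset D) c hc (by
      have h1 : ({c ⊓ a, c ⊓ b} : Finset D).sup id = (c ⊓ a) ⊔ (c ⊓ b) := by
        simp [Finset.sup_insert, Finset.sup_singleton]
      rw [h1, ← hdistrib, inf_eq_left.2 hcab])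
    have hsup : ({c ⊓ a, c ⊓ b} : Finset D).sup h = h (c ⊓ a) ⊔ h (c ⊓ b) := by
      simp [Finset.sup_insert, Finset.sup_singleton]
    rw [hsup] at hcov
    refine ⟨h (c ⊓ a), hcpt _, h (c ⊓ b), hcpt _,
      (hle _).trans inf_le_right, (hle _).trans inf_le_right, ?_⟩
    refine le_antisymm hcov (sup_le ((hle _).trans inf_le_left) ((hle _).trans inf_le_left))
  · -- the ω-chain
    obtain ⟨f, hf⟩ := hcount.exists_eq_range ⟨⊥, hbot⟩
    set step : Finset D → Finset D := fun G =>
      if h : ∀ x ∈ G, IsCompactElement x then (pudlak hdistrib G h).choose else ∅ with hstep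
    have step_spec : ∀ G : Finset D, (∀ x ∈ G, IsCompactElement x) →
        G ⊆ step G ∧ (∀ t ∈ step G, IsCompactElement t) ∧ ⊥ ∈ step G ∧
        (∀ a ∈ step G, ∀ b ∈ step G, a ⊔ b ∈ step G) ∧
        (∀ a ∈ step G, ∀ b ∈ step G, ∀ c ∈ step G, c ≤ a ⊔ b →
          ∃ a' ∈ step G, ∃ b' ∈ step G, a' ≤ a ∧ b' ≤ b ∧ c = a' ⊔ b') := by
      intro G hG
      have : step G = (pudlak hdistrib G hG).choose := by rw [hstep]; exact dif_pos hG
      rw [this]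
      exact (pudlak hdistrib G hG).choose_spec
    set T' : ℕ → Finset D := fun n =>
      Nat.rec (step ∅) (fun k ih => step (insert (f k) ih)) n with hT'
    have hfS : ∀ n, IsCompactElement (f n) := by
      intro n
      have : f n ∈ Set.range f := Set.mem_range_self n
      rw [← hf] at this
      exact this
    have hT'cpt : ∀ n, ∀ x ∈ T' n, IsCompactElement x := by
      intro n
      induction n with
      | zero => exact (step_spec ∅ (by simp)).2.1
      | succ k ih =>
        have hins : ∀ x ∈ insert (f k) (T' k), IsCompactElement x := by
          intro x hx
          rcases Finset.mem_insert.1 hx with h | h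
          · exact h ▸ hfS k
          · exact ih x h
        exact (step_spec _ hins).2.1
    have hins_cpt : ∀ k, ∀ x ∈ insert (f k) (T' k), IsCompactElement x := by
      intro k x hx
      rcases Finset.mem_insert.1 hx with h | h
      · exact h ▸ hfS k
      · exact hT'cpt k x h
    have hT'succ : ∀ k, T' (k + 1) = step (insert (f k) (T' k)) := fun k => rfl
    have hT'mono : ∀ k, T' k ⊆ T' (k + 1) := by
      intro k
      rw [hT'succ k]
      exact fun x hx =>
        (step_spec _ (hins_cpt k)).1 (Finset.mem_insert_of_mem hx)
    refine ⟨fun n => ↑(T' n), ?_, ?_, ?_⟩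
    · exact monotone_nat_of_le_succ fun n => Finset.coe_subset.2 (hT'mono n)
    · refine Set.eq_of_subset_of_subset ?_ ?_
      · refine Set.iUnion_subset fun n x hx => ?_
        exact hT'cpt n x hx
      · intro x hx
        rw [hf] at hx
        obtain ⟨n, rfl⟩ := hx
        refine Set.mem_iUnion.2 ⟨n + 1, ?_⟩
        rw [hT'succ n]
        exact (step_spec _ (hins_cpt n)).1 (Finset.mem_insert_self _ _)
    · intro n
      have hspec : T' n ⊆ step (match n with
          | 0 => (∅ : Finset D)
          | Nat.succ k => insert (f k) (T' k)) := by
        cases n <;> exact fun x hx => hx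
      -- get the properties of `T' n` directly
      have hprops : (∀ t ∈ T' n, IsCompactElement t) ∧ ⊥ ∈ T' n ∧
          (∀ a ∈ T' n, ∀ b ∈ T' n, a ⊔ b ∈ T' n) ∧
          (∀ a ∈ T' n, ∀ b ∈ T' n, ∀ c ∈ T' n, c ≤ a ⊔ b →
            ∃ a' ∈ T' n, ∃ b' ∈ T' n, a' ≤ a ∧ b' ≤ b ∧ c = a' ⊔ b') := by
        cases n with
        | zero =>
          have h := step_spec ∅ (by simp)
          exact ⟨h.2.1, h.2.2.1, h.2.2.2.1, h.2.2.2.2⟩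
        | succ k =>
          have h := step_spec _ (hins_cpt k)
          rw [← hT'succ k] at h
          exact ⟨h.2.1, h.2.2.1, h.2.2.2.1, h.2.2.2.2⟩
      refine ⟨fun x hx => hprops.1 x hx, Finset.finite_toSet _, hprops.2.1, ?_, ?_⟩
      · intro a ha b hb
        exact hprops.2.2.1 a ha b hb
      · intro a ha b hb c hc hle
        obtain ⟨a', ha', b', hb', h1, h2, h3⟩ := hprops.2.2.2 a ha b hb c hc hle
        exact ⟨a', ha', b', hb', h1, h2, h3⟩
end
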